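/- arXiv:1803.01685 — 7 statements merged into one kernel-verified Lean document; each statement's English description precedes it below -/
import Mathlib

section
/- Let n ≥ 1 and let x₁(t),...,x_n(t) be continuous real functions on an unbounded interval (T, ∞) such that for every t the elementary symmetric combinations satisfy (-1)^k e_k(x₁(t),...,x_n(t)) = a_k t + b_k for k = 1,...,n, with a₁ ≠ 0. Then as t → ∞, at most one of the functions x_i(t) is unbounded; more precisely, there exist constants C and an index set of size at least n-1 on which all corresponding x_i(t) are bounded for large t. -/
open Polynomial Filter

/-!
Write `p = ∏ (X - C xᵢ)`, `c = p.nextCoeff = -∑ xᵢ` and `M` for the sum of the absolute values of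
the remaining lower coefficients. From `p(z) = 0` one gets `|z| |z + c| ≤ M` whenever `|z| ≥ 1`,
so every root `z` with `|z| ≥ ρ ≥ 1` lies within `M / ρ` of `-c`. When `|c|` dominates
`n (ρ + M / ρ)`, comparing with `∑ xᵢ = -c` shows that at most one root has `|z| ≥ ρ`, and no root
has `|z| = ρ`. Here `c` grows like `|a₁| t` while `M = O(t)`, so a fixed large `ρ` works for all
large `t`; by continuity a root that is below `ρ` at the time some root exceeds it stays below
forever.
-/

open Finset in
theorem Polynomial.Monic.norm_mul_norm_add_nextCoeff_le {K : Type*} [NormedField K] {p : K[X]}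
    (hp : p.Monic) {z : K} (hz : p.IsRoot z) (hz1 : 1 ≤ ‖z‖) :
    ‖z‖ * ‖z + p.nextCoeff‖ ≤ ∑ k ∈ range (p.natDegree - 1), ‖p.coeff k‖ := by
  obtain ⟨m, hm⟩ : ∃ m, p.natDegree = m + 1 := by
    refine Nat.exists_eq_succ_of_ne_zero fun h => ?_
    rw [hp.natDegree_eq_zero] at h
    simp [h] at hz
  have hsplit : z ^ m * (z + p.nextCoeff) = -∑ k ∈ range m, p.coeff k * z ^ k := by
    have hev := hz.eq_zero
    rw [eval_eq_sum_range, hm, sum_range_succ, sum_range_succ, ← hm, hp.coeff_natDegree, hm] at hev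
    rw [nextCoeff_of_natDegree_pos (by omega), hm, Nat.add_sub_cancel]
    linear_combination hev
  have hzm : 0 < ‖z‖ ^ m := by positivity
  refine le_of_mul_le_mul_left ?_ hzm
  calc ‖z‖ ^ m * (‖z‖ * ‖z + p.nextCoeff‖) = ‖z‖ * ‖∑ k ∈ range m, p.coeff k * z ^ k‖ := by
        rw [← norm_neg (∑ k ∈ range m, _), ← hsplit, norm_mul, norm_pow]; ring
    _ ≤ ‖z‖ * ∑ k ∈ range m, ‖p.coeff k‖ * ‖z‖ ^ k := by
        gcongr
        exact (norm_sum_le _ _).trans_eq (by simp [norm_pow])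
    _ ≤ ∑ k ∈ range m, ‖p.coeff k‖ * ‖z‖ ^ m := by
        rw [mul_sum]
        refine sum_le_sum fun k hk => ?_
        rw [mul_left_comm, ← pow_succ']
        gcongr
        exact mem_range.1 hk
    _ = ‖z‖ ^ m * ∑ k ∈ range (p.natDegree - 1), ‖p.coeff k‖ := by
        rw [hm, Nat.add_sub_cancel, ← sum_mul, mul_comm]

section RootsNearNegNextCoeff

open Finset Fintype

variable {K ι : Type*} [Fintype ι] {r : ι → K} {ρ M : ℝ}

theorem norm_sub_sum_le_of_le_norm [NormedField K] (hρ : 1 ≤ ρ)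
    (hM : ∑ k ∈ range (card ι - 1), ‖(∏ i, (X - C (r i))).coeff k‖ ≤ M) {i : ι}
    (hi : ρ ≤ ‖r i‖) : ‖r i - ∑ j, r j‖ ≤ M / ρ := by
  have hroot : (∏ j, (X - C (r j))).IsRoot (r i) := by
    simp [IsRoot, eval_prod, prod_eq_zero_iff, sub_eq_zero]
  have key := (monic_prod_X_sub_C r univ).norm_mul_norm_add_nextCoeff_le hroot (hρ.trans hi)
  rw [prod_X_sub_C_nextCoeff, ← sub_eq_add_neg, natDegree_finsetProd_X_sub_C_eq_card,
    card_univ] at key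
  rw [le_div_iff₀ (by linarith)]
  calc ‖r i - ∑ j, r j‖ * ρ ≤ ‖r i - ∑ j, r j‖ * ‖r i‖ := by gcongr
    _ ≤ M := by linarith

theorem norm_ne_of_card_mul_lt [NormedField K] (hρ : 1 ≤ ρ)
    (hM : ∑ k ∈ range (card ι - 1), ‖(∏ i, (X - C (r i))).coeff k‖ ≤ M)
    (hs : card ι * (ρ + M / ρ) < ‖∑ i, r i‖) (i : ι) : ‖r i‖ ≠ ρ := by
  intro hi
  have hclose := norm_sub_sum_le_of_le_norm hρ hM hi.ge
  have hM0 : 0 ≤ M := (Finset.sum_nonneg fun _ _ => norm_nonneg _).trans hM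
  have hcard : (1 : ℝ) ≤ card ι := Nat.one_le_cast.2 (card_pos_iff.2 ⟨i⟩)
  have : ρ + M / ρ ≤ card ι * (ρ + M / ρ) := le_mul_of_one_le_left (by positivity) hcard
  have := norm_sub_norm_le (∑ j, r j) (∑ j, r j - r i)
  rw [sub_sub_cancel, norm_sub_rev] at this
  linarith

theorem subsingleton_setOf_le_norm_of_card_mul_lt [RCLike K] (hρ : 1 ≤ ρ)
    (hM : ∑ k ∈ range (card ι - 1), ‖(∏ i, (X - C (r i))).coeff k‖ ≤ M)
    (hs : card ι * (ρ + M / ρ) < ‖∑ i, r i‖) : {i | ρ ≤ ‖r i‖}.Subsingleton := by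
  classical
  intro i hi j hj
  by_contra hij
  set s := ∑ k, r k
  set B := univ.filter fun k => ρ ≤ ‖r k‖
  have hB : 2 ≤ #B := by
    rw [← card_pair hij]
    exact card_le_card (by simpa [insert_subset_iff, B] using ⟨hi, hj⟩)
  have hsplit : #B • s = s - (∑ k ∈ B, (r k - s) + ∑ k ∈ Bᶜ, r k) := by
    rw [sum_sub_distrib, sum_const]
    linear_combination sum_add_sum_compl B r
  have hnear : ‖∑ k ∈ B, (r k - s)‖ ≤ #B * (M / ρ) := by
    refine (norm_sum_le _ _).trans ?_
    simpa using sum_le_card_nsmul B _ _ fun k hk =>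
      norm_sub_sum_le_of_le_norm hρ hM (mem_filter.1 hk).2
  have hfar : ‖∑ k ∈ Bᶜ, r k‖ ≤ #Bᶜ * ρ := by
    refine (norm_sum_le _ _).trans ?_
    simpa using sum_le_card_nsmul Bᶜ (‖r ·‖) ρ fun k hk => (not_le.1 (by simpa [B] using hk)).le
  have hcard : (#B : ℝ) + #Bᶜ = card ι := by exact_mod_cast card_add_card_compl B
  have hM0 : 0 ≤ M := (Finset.sum_nonneg fun _ _ => norm_nonneg _).trans hM
  have hupper : #B * ‖s‖ ≤ ‖s‖ + card ι * (ρ + M / ρ) := by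
    rw [← nsmul_eq_mul, ← RCLike.norm_nsmul K, hsplit]
    calc ‖s - (∑ k ∈ B, (r k - s) + ∑ k ∈ Bᶜ, r k)‖
        ≤ ‖s‖ + (‖∑ k ∈ B, (r k - s)‖ + ‖∑ k ∈ Bᶜ, r k‖) :=
          (norm_sub_le _ _).trans (add_le_add_right (norm_add_le _ _) _)
      _ ≤ ‖s‖ + card ι * (ρ + M / ρ) := by
          have : 0 ≤ M / ρ := by positivity
          nlinarith
  have : (2 : ℝ) * ‖s‖ ≤ #B * ‖s‖ := by gcongr; exact_mod_cast hB
  linarith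

end RootsNearNegNextCoeff

theorem IsPreconnected.lt_of_forall_ne {X α : Type*} [TopologicalSpace X] [LinearOrder α]
    [TopologicalSpace α] [OrderClosedTopology α] {s : Set X} (hs : IsPreconnected s) {f : X → α}
    (hf : ContinuousOn f s) {c : α} (hne : ∀ x ∈ s, f x ≠ c) {x y : X} (hx : x ∈ s) (hy : y ∈ s)
    (hlt : f x < c) : f y < c := by
  by_contra! hle
  obtain ⟨z, hz, hfz⟩ := hs.intermediate_value hx hy hf ⟨hlt.le, hle⟩
  exact hne z hz hfz

open Finset Set in
theorem exists_card_sub_one_le_eventually_lt {ι : Type*} [Fintype ι] {g : ι → ℝ → ℝ}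
    {ρ t₁ : ℝ} (hg : ∀ i, ContinuousOn (g i) (Ici t₁)) (hne : ∀ t ≥ t₁, ∀ i, g i t ≠ ρ)
    (hsub : ∀ t ≥ t₁, {i | ρ < g i t}.Subsingleton) :
    ∃ S : Finset ι, Fintype.card ι - 1 ≤ #S ∧ ∀ᶠ t in atTop, ∀ i ∈ S, g i t < ρ := by
  classical
  by_cases hbig : ∃ t₀ ≥ t₁, ∃ i₀, ρ < g i₀ t₀
  · obtain ⟨t₀, ht₀, i₀, hi₀⟩ := hbig
    refine ⟨univ.erase i₀, by simp [card_erase_of_mem], ?_⟩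
    filter_upwards [eventually_ge_atTop t₀] with t ht j hj
    have hj₀ : g j t₀ < ρ :=
      (hne t₀ ht₀ j).lt_of_le (not_lt.1 fun h => ne_of_mem_erase hj (hsub t₀ ht₀ h hi₀))
    exact isPreconnected_Ici.lt_of_forall_ne ((hg j).mono (Ici_subset_Ici.2 ht₀))
      (fun s hs => hne s (ht₀.trans hs) j) self_mem_Ici ht hj₀
  · push Not at hbig
    refine ⟨univ, by simp, ?_⟩
    filter_upwards [eventually_ge_atTop t₁] with t ht i _
    exact (hbig t ht i).lt_of_ne (hne t ht i)

theorem exists_one_le_eventually_mul_add_div_lt (d α β : ℝ) {a : ℝ} (ha : a ≠ 0) (b : ℝ) :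
    ∃ ρ, 1 ≤ ρ ∧ ∀ᶠ t in atTop, d * (ρ + (α * t + β) / ρ) < |a * t + b| := by
  have ha' : 0 < |a| := abs_pos.2 ha
  set ρ := 1 + |d * α| / |a|
  have hρ : 1 ≤ ρ := le_add_of_nonneg_right (by positivity)
  have hslope : d * α / ρ < |a| := by
    rw [div_lt_iff₀ (by positivity)]
    have : |a| * ρ = |a| + |d * α| := by simp only [ρ]; field_simp
    linarith [le_abs_self (d * α)]
  refine ⟨ρ, hρ, ?_⟩
  filter_upwards [eventually_ge_atTop 0,
    eventually_gt_atTop ((d * ρ + d * β / ρ + |b|) / (|a| - d * α / ρ))] with t ht0 ht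
  rw [div_lt_iff₀ (by linarith)] at ht
  have hlin : |a| * t - |b| ≤ |a * t + b| := by
    simpa [abs_mul, abs_of_nonneg ht0] using abs_sub_abs_le_abs_sub (a * t) (-b)
  calc d * (ρ + (α * t + β) / ρ) = d * α / ρ * t + (d * ρ + d * β / ρ) := by ring
    _ < |a * t + b| := by linarith

theorem sum_abs_coeff_le_of_coeff_eq (p : ℝ[X]) {n : ℕ} {a b : ℕ → ℝ} {t : ℝ} (ht : 0 ≤ t)
    (hcoef : ∀ k, 1 ≤ k → k ≤ n → p.coeff (n - k) = a k * t + b k) :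
    ∑ j ∈ Finset.range (n - 1), |p.coeff j| ≤
      (∑ j ∈ Finset.range (n - 1), |a (n - j)|) * t + ∑ j ∈ Finset.range (n - 1), |b (n - j)| := by
  rw [Finset.sum_mul, ← Finset.sum_add_distrib]
  refine Finset.sum_le_sum fun j hj => ?_
  have hj := Finset.mem_range.1 hj
  have h := hcoef (n - j) (by omega) (by omega)
  rw [Nat.sub_sub_self (by omega)] at h
  rw [h]
  exact (abs_add_le _ _).trans_eq (by rw [abs_mul, abs_of_nonneg ht])

open Finset in
theorem at_most_one_unbounded_node_general (n : ℕ) (T : ℝ)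
    (x : Fin n → ℝ → ℝ) (a b : ℕ → ℝ)
    (hcont : ∀ i, ContinuousOn (x i) (Set.Ioi T))
    (hcoef : ∀ t ∈ Set.Ioi T, ∀ k, 1 ≤ k → k ≤ n →
      (∏ i, (X - C (x i t))).coeff (n - k) = a k * t + b k)
    (ha : a 1 ≠ 0) :
    ∃ C : ℝ, ∃ S : Finset (Fin n), n - 1 ≤ S.card ∧
      ∃ T' : ℝ, ∀ t, T' < t → t ∈ Set.Ioi T → ∀ i ∈ S, |x i t| ≤ C := by
  set α := ∑ j ∈ range (n - 1), |a (n - j)|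
  set β := ∑ j ∈ range (n - 1), |b (n - j)|
  obtain ⟨ρ, hρ, hlarge⟩ := exists_one_le_eventually_mul_add_div_lt n α β ha (b 1)
  obtain ⟨t₁, ht₁⟩ := eventually_atTop.1
    (hlarge.and ((eventually_gt_atTop T).and (eventually_ge_atTop 0)))
  have hM (t) (ht : t ≥ t₁) :
      ∑ k ∈ range (Fintype.card (Fin n) - 1), ‖(∏ i, (X - C (x i t))).coeff k‖ ≤ α * t + β := by
    simpa using sum_abs_coeff_le_of_coeff_eq _ (ht₁ t ht).2.2 (hcoef t (ht₁ t ht).2.1)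
  have hdom (t) (ht : t ≥ t₁) (hn : 0 < n) :
      Fintype.card (Fin n) * (ρ + (α * t + β) / ρ) < ‖∑ i, x i t‖ := by
    have h1 := hcoef t (ht₁ t ht).2.1 1 le_rfl hn
    have h2 := prod_X_sub_C_coeff_card_pred univ (fun i => x i t) (by simpa using hn)
    rw [card_univ, Fintype.card_fin, h1] at h2
    rw [Fintype.card_fin, Real.norm_eq_abs, ← abs_neg, ← h2]
    exact (ht₁ t ht).1
  obtain ⟨S, hS, hev⟩ := exists_card_sub_one_le_eventually_lt (g := fun i t => |x i t|) (ρ := ρ)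
    (fun i => (hcont i).abs.mono fun s hs => (ht₁ t₁ le_rfl).2.1.trans_le hs)
    (fun t ht i => by simpa using norm_ne_of_card_mul_lt hρ (hM t ht) (hdom t ht i.pos) i)
    (fun t ht i hi j hj => by
      simpa using subsingleton_setOf_le_norm_of_card_mul_lt (K := ℝ) hρ (hM t ht) (hdom t ht i.pos)
        (le_of_lt (by simpa using hi)) (le_of_lt (by simpa using hj)))
  obtain ⟨T', hT'⟩ := eventually_atTop.1 hev
  exact ⟨ρ, S, by simpa using hS, T', fun t ht _ i hi => (hT' t ht.le i hi).le⟩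

/-- If `x₁(t),…,x_n(t)` are continuous on `(T,∞)` and their signed elementary
symmetric functions `(-1)^k e_k(x(t))` (i.e. the coefficients of the monic
polynomial `∏ (z - x_i(t))`) are affine functions `a_k t + b_k` with
`a₁ ≠ 0`, then as `t → ∞` at most one of the `x_i(t)` is unbounded: there is a
constant `C` and an index set of size at least `n - 1` on which all the
corresponding `x_i(t)` are bounded by `C` for all large `t`. -/
theorem at_most_one_unbounded_node (n : ℕ) (hn : 1 ≤ n) (T : ℝ)
    (x : Fin n → ℝ → ℝ) (a b : ℕ → ℝ)
    (hcont : ∀ i, ContinuousOn (x i) (Set.Ioi T))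
    (hcoef : ∀ t ∈ Set.Ioi T, ∀ k, 1 ≤ k → k ≤ n →
      (∏ i, (X - C (x i t))).coeff (n - k) = a k * t + b k)
    (ha : a 1 ≠ 0) :
    ∃ C : ℝ, ∃ S : Finset (Fin n), n - 1 ≤ S.card ∧
      ∃ T' : ℝ, ∀ t, T' < t → t ∈ Set.Ioi T → ∀ i ∈ S, |x i t| ≤ C :=
  at_most_one_unbounded_node_general n T x a b hcont hcoef ha
end

section
/- Let n ≥ 1, let a_k, b_k ∈ ℝ with a₁ > 0, and for t ∈ ℝ let P_t(λ) = λⁿ + (a₁t+b₁)λ^{n-1} + (a₂t+b₂)λ^{n-2} + ... + (a_n t + b_n). Then there exist λ' ∈ ℝ and T ∈ ℝ such that for all t > T, P_t has no real roots in [λ', ∞). -/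
/-- For the monic polynomial
`P_t(λ) = λ^n + (a₁ t + b₁) λ^{n-1} + ⋯ + (a_n t + b_n)` with `a₁ > 0`, there
are `λ'` and `T` such that for all `t > T`, `P_t` has no real roots in
`[λ', ∞)`. -/
theorem no_large_roots (n : ℕ) (hn : 1 ≤ n) (a b : ℕ → ℝ) (ha : 0 < a 1) :
    ∃ lam T : ℝ, ∀ t, T < t → ∀ l : ℝ, lam ≤ l →
      l ^ n + ∑ k ∈ Finset.Icc 1 n, (a k * t + b k) * l ^ (n - k) ≠ 0 := by
  set S := ∑ k ∈ Finset.Icc 1 n, |a k| with hS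
  set B := ∑ k ∈ Finset.Icc 1 n, |b k| with hB
  refine ⟨max 1 (max (1 + B) ((S + 1) / a 1)), 0, ?_⟩
  intro t ht l hl
  have hl1 : (1:ℝ) ≤ l := le_trans (le_max_left _ _) hl
  have hl0 : 0 < l := lt_of_lt_of_le one_pos hl1
  have hlB : 1 + B ≤ l := le_trans (le_trans (le_max_left _ _) (le_max_right _ _)) hl
  have hlS : (S + 1) / a 1 ≤ l := le_trans (le_trans (le_max_right _ _) (le_max_right _ _)) hl
  have haS : S + 1 ≤ a 1 * l := by
    rw [div_le_iff₀ ha] at hlS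
    nlinarith
  have hsplit : ∑ k ∈ Finset.Icc 1 n, (a k * t + b k) * l ^ (n - k)
      = t * (∑ k ∈ Finset.Icc 1 n, a k * l ^ (n - k))
        + ∑ k ∈ Finset.Icc 1 n, b k * l ^ (n - k) := by
    rw [Finset.mul_sum, ← Finset.sum_add_distrib]
    exact Finset.sum_congr rfl (fun k _ => by ring)
  have hpowle : ∀ k ∈ Finset.Icc 1 n, l ^ (n - k) ≤ l ^ (n - 1) := by
    intro k hk
    have hk1 : 1 ≤ k := (Finset.mem_Icc.mp hk).1
    exact pow_le_pow_right₀ hl1 (by omega)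
  have hbsum : -(B * l ^ (n - 1)) ≤ ∑ k ∈ Finset.Icc 1 n, b k * l ^ (n - k) := by
    have h : ∑ k ∈ Finset.Icc 1 n, -(|b k| * l ^ (n - 1))
        ≤ ∑ k ∈ Finset.Icc 1 n, b k * l ^ (n - k) := by
      apply Finset.sum_le_sum
      intro k hk
      have h1 := hpowle k hk
      have h2 : -|b k| ≤ b k := neg_abs_le _
      have hpnn : (0:ℝ) ≤ l ^ (n - k) := by positivity
      nlinarith [abs_nonneg (b k)]
    calc -(B * l ^ (n - 1)) = ∑ k ∈ Finset.Icc 1 n, -(|b k| * l ^ (n - 1)) := by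
          rw [Finset.sum_neg_distrib, ← Finset.sum_mul]
      _ ≤ _ := h
  have hln : l ^ n = l ^ (n - 1) * l := by
    rw [← pow_succ]; congr 1; omega
  have hp : (0:ℝ) < l ^ (n - 1) := pow_pos hl0 _
  have hQ : 0 < l ^ n + ∑ k ∈ Finset.Icc 1 n, b k * l ^ (n - k) := by
    nlinarith
  have h1mem : 1 ∈ Finset.Icc 1 n := Finset.mem_Icc.mpr ⟨le_refl 1, hn⟩
  have hA : 0 ≤ ∑ k ∈ Finset.Icc 1 n, a k * l ^ (n - k) := by
    rw [← Finset.add_sum_erase _ _ h1mem]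
    rcases Nat.lt_or_ge n 2 with hn2 | hn2
    · have hn1 : n = 1 := by omega
      subst hn1
      simp only [Finset.Icc_self, Finset.erase_singleton, Finset.sum_empty, add_zero]
      positivity
    · have hp2 : (0:ℝ) < l ^ (n - 2) := pow_pos hl0 _
      have hrest : -(S * l ^ (n - 2)) ≤ ∑ k ∈ (Finset.Icc 1 n).erase 1, a k * l ^ (n - k) := by
        have h : ∑ k ∈ (Finset.Icc 1 n).erase 1, -(|a k| * l ^ (n - 2))
            ≤ ∑ k ∈ (Finset.Icc 1 n).erase 1, a k * l ^ (n - k) := by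
          apply Finset.sum_le_sum
          intro k hk
          have hk2 : 2 ≤ k := by
            have h1 := Finset.mem_erase.mp hk
            have h2 := (Finset.mem_Icc.mp h1.2).1
            omega
          have h1 : l ^ (n - k) ≤ l ^ (n - 2) := pow_le_pow_right₀ hl1 (by omega)
          have h2 : -|a k| ≤ a k := neg_abs_le _
          have hpnn : (0:ℝ) ≤ l ^ (n - k) := by positivity
          nlinarith [abs_nonneg (a k)]
        have hSsub : ∑ k ∈ (Finset.Icc 1 n).erase 1, |a k| ≤ S := by
          apply Finset.sum_le_sum_of_subset_of_nonneg (Finset.erase_subset _ _)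
          intro k _ _
          exact abs_nonneg _
        calc -(S * l ^ (n - 2)) ≤ -((∑ k ∈ (Finset.Icc 1 n).erase 1, |a k|) * l ^ (n - 2)) := by
              nlinarith
          _ = ∑ k ∈ (Finset.Icc 1 n).erase 1, -(|a k| * l ^ (n - 2)) := by
              rw [Finset.sum_neg_distrib, ← Finset.sum_mul]
          _ ≤ _ := h
      have hln1 : l ^ (n - 1) = l * l ^ (n - 2) := by
        rw [← pow_succ']; congr 1; omega
      have hA1 : (S + 1) * l ^ (n - 2) ≤ a 1 * l ^ (n - 1) := by
        rw [hln1]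
        nlinarith
      nlinarith
  rw [hsplit]
  have : 0 < t * (∑ k ∈ Finset.Icc 1 n, a k * l ^ (n - k))
      + (l ^ n + ∑ k ∈ Finset.Icc 1 n, b k * l ^ (n - k)) := by
    have := mul_nonneg (le_of_lt ht) hA
    linarith
  intro heq
  nlinarith
end

section
/- Let n ≥ 1, let a_k, b_k ∈ ℝ with a₁ > 0, and for t ∈ ℝ let P_t(λ) = λⁿ + (a₁t+b₁)λ^{n-1} + ... + (a_n t + b_n). Then there exist λ₀ ∈ ℝ and T ∈ ℝ such that for all t > T, P_t has at most one real root (counted with multiplicity) in (-∞, λ₀). -/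
open Polynomial Filter

lemma key_count (p : ℝ[X]) (hp : p ≠ 0) (c : ℝ)
    (h1 : ∀ r : ℝ, r < c → p.IsRoot r → ¬ p.derivative.IsRoot r)
    (h2 : ∀ r s : ℝ, r < c → s < c → p.IsRoot r → p.IsRoot s → r = s) :
    Multiset.card (p.roots.filter (fun r => r < c)) ≤ 1 := by
  by_contra h
  push_neg at h
  set M := p.roots.filter (fun r => r < c) with hM
  have hpos : 0 < Multiset.card M := by omega
  obtain ⟨r, hr⟩ := Multiset.card_pos_iff_exists_mem.mp hpos
  have hrroots : r ∈ p.roots := Multiset.mem_of_mem_filter hr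
  have hrc : r < c := by
    have := Multiset.of_mem_filter hr
    simpa using this
  have hroot : p.IsRoot r := (mem_roots hp).mp hrroots
  have hall : ∀ x ∈ M, x = r := by
    intro x hx
    have hxroots : x ∈ p.roots := Multiset.mem_of_mem_filter hx
    have hxc : x < c := by simpa using Multiset.of_mem_filter hx
    exact h2 x r hxc hrc ((mem_roots hp).mp hxroots) hroot
  have hrep : M = Multiset.replicate (Multiset.card M) r :=
    (Multiset.eq_replicate_card).mpr hall
  have hcount : 2 ≤ M.count r := by
    rw [hrep, Multiset.count_replicate]
    simp only [if_pos rfl, if_true]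
    omega
  have hcount2 : 2 ≤ p.roots.count r := le_trans hcount (Multiset.count_le_of_le r (Multiset.filter_le _ _))
  rw [count_roots] at hcount2
  have hdvd : (X - C r) ^ 2 ∣ p :=
    dvd_trans (pow_dvd_pow _ hcount2) (p.pow_rootMultiplicity_dvd r)
  obtain ⟨u, hu⟩ := hdvd
  have : p.derivative.IsRoot r := by
    rw [hu]
    simp only [IsRoot, derivative_mul, derivative_pow, eval_add, eval_mul, eval_pow,
      eval_sub, eval_X, eval_C, sub_self]
    ring
  exact h1 r hrc hroot this


lemma sum_ineq (n : ℕ) (hn : 1 ≤ n) (Cf : ℕ → ℝ)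
    (hCn : Cf n = -1) (hC : ∀ m, m < n → 0 ≤ Cf m) (hC0 : 0 < Cf 0)
    (u v : ℝ) (hv : 0 < v) (hvu : v < u) :
    (∑ m ∈ Finset.range (n+1), Cf m * u ^ m) * v ^ n
      < (∑ m ∈ Finset.range (n+1), Cf m * v ^ m) * u ^ n := by
  have hu : 0 < u := hv.trans hvu
  have key : 0 < ∑ m ∈ Finset.range (n+1), (Cf m * v ^ m * u ^ n - Cf m * u ^ m * v ^ n) := by
    apply Finset.sum_pos'
    · intro m hm
      rw [Finset.mem_range] at hm
      have hm' : m ≤ n := by omega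
      have hfac : v ^ m * u ^ n - u ^ m * v ^ n = u ^ m * v ^ m * (u ^ (n - m) - v ^ (n - m)) := by
        have h1 : u ^ n = u ^ m * u ^ (n - m) := by rw [← pow_add]; congr 1; omega
        have h2 : v ^ n = v ^ m * v ^ (n - m) := by rw [← pow_add]; congr 1; omega
        rw [h1, h2]; ring
      rcases eq_or_lt_of_le hm' with h | h
      · subst h; exact le_of_eq (by ring)
      · have hCm : 0 ≤ Cf m := hC m h
        have : 0 ≤ u ^ m * v ^ m * (u ^ (n - m) - v ^ (n - m)) := by
          apply mul_nonneg (by positivity)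
          have := pow_le_pow_left₀ hv.le hvu.le (n - m)
          linarith
        calc (0:ℝ) ≤ Cf m * (u ^ m * v ^ m * (u ^ (n - m) - v ^ (n - m))) :=
              mul_nonneg hCm this
          _ = Cf m * v ^ m * u ^ n - Cf m * u ^ m * v ^ n := by rw [← hfac]; ring
    · refine ⟨0, Finset.mem_range.mpr (by omega), ?_⟩
      have hlt : v ^ n < u ^ n := pow_lt_pow_left₀ hvu hv.le (by omega)
      simp only [pow_zero, mul_one]
      nlinarith
  have : ∑ m ∈ Finset.range (n+1), (Cf m * v ^ m * u ^ n - Cf m * u ^ m * v ^ n)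
      = (∑ m ∈ Finset.range (n+1), Cf m * v ^ m) * u ^ n
        - (∑ m ∈ Finset.range (n+1), Cf m * u ^ m) * v ^ n := by
    rw [Finset.sum_sub_distrib, Finset.sum_mul, Finset.sum_mul]
  linarith [this ▸ key]

lemma deriv_sum_neg (n : ℕ) (hn : 1 ≤ n) (Cf : ℕ → ℝ)
    (hCn : Cf n = -1) (hC : ∀ m, m < n → 0 ≤ Cf m) (hC0 : 0 < Cf 0)
    (s : ℝ) (hs : 0 < s) (hroot : ∑ m ∈ Finset.range (n+1), Cf m * s ^ m = 0) :
    (∑ m ∈ Finset.range (n+1), (m : ℝ) * Cf m * s ^ m) < 0 := by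
  have hsplit : ∀ g : ℕ → ℝ, ∑ m ∈ Finset.range (n+1), g m
      = (∑ m ∈ Finset.range n, g m) + g n := fun g => Finset.sum_range_succ g n
  rw [hsplit] at hroot ⊢
  have hsn : ∑ m ∈ Finset.range n, Cf m * s ^ m = s ^ n := by
    rw [hCn] at hroot; linarith
  have heq : (∑ m ∈ Finset.range n, (m:ℝ) * Cf m * s ^ m) + (n:ℝ) * Cf n * s ^ n
      = ∑ m ∈ Finset.range n, ((m:ℝ) - n) * (Cf m * s ^ m) := by
    rw [hCn, ← hsn, Finset.mul_sum, ← Finset.sum_add_distrib]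
    exact Finset.sum_congr rfl (fun m _ => by ring)
  rw [heq]
  have h0 : (0:ℝ) = ∑ m ∈ Finset.range n, (0:ℝ) := by simp
  rw [h0]
  apply Finset.sum_lt_sum
  · intro m hm
    rw [Finset.mem_range] at hm
    have : ((m:ℝ) - n) ≤ 0 := by
      have : (m:ℝ) < n := by exact_mod_cast hm
      linarith
    have hnn : 0 ≤ Cf m * s ^ m := mul_nonneg (hC m hm) (by positivity)
    exact mul_nonpos_of_nonpos_of_nonneg this hnn
  · refine ⟨0, Finset.mem_range.mpr (by omega), ?_⟩
    simp only [Nat.cast_zero, zero_sub, pow_zero, mul_one]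
    have : (0:ℝ) < n := by exact_mod_cast hn
    nlinarith


lemma neg_inf_sign (D : ℝ[X]) (d : ℕ) (hdeg : D.natDegree = d) (hlead : 0 < D.coeff d) :
    ∀ᶠ x in Filter.atBot, 0 < (-1:ℝ)^d * D.eval x := by
  rcases Nat.eq_zero_or_pos d with hd | hd
  · subst hd
    obtain ⟨a, ha⟩ := Polynomial.natDegree_eq_zero.mp hdeg
    have : a = D.coeff 0 := by rw [← ha]; simp
    filter_upwards with x
    rw [← ha]
    simp only [pow_zero, one_mul, eval_C]
    rw [this]
    exact hlead
  · set E := D.comp (-X) with hE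
    have hDlead : D.leadingCoeff = D.coeff d := by rw [leadingCoeff, hdeg]
    have hnX : (-X : ℝ[X]).natDegree = 1 := by simp
    have hEdeg : E.natDegree = d := by
      rw [hE, natDegree_comp, hnX, hdeg, mul_one]
    have hElead : E.leadingCoeff = D.coeff d * (-1:ℝ)^d := by
      rw [hE, leadingCoeff_comp (by rw [hnX]; omega), hDlead, hdeg]
      congr 1
      simp [leadingCoeff]
    set F := C ((-1:ℝ)^d) * E with hF
    have hne : ((-1:ℝ)^d) ≠ 0 := by positivity
    have hFlead : F.leadingCoeff = D.coeff d := by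
      rw [hF, leadingCoeff_mul, leadingCoeff_C, hElead]
      rw [mul_comm (D.coeff d) _, ← mul_assoc, ← pow_add]
      simp [pow_add, ← two_mul, pow_mul]
    have hEne : E ≠ 0 := by
      intro h
      rw [h, leadingCoeff_zero] at hElead
      have : D.coeff d * (-1:ℝ)^d ≠ 0 := mul_ne_zero (ne_of_gt hlead) hne
      exact this hElead.symm
    have hFdeg : (0 : WithBot ℕ) < F.degree := by
      rw [hF, degree_mul, degree_C hne, zero_add, degree_eq_natDegree hEne, hEdeg]
      exact_mod_cast hd
    have htop : Tendsto (fun y => F.eval y) atTop atTop :=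
      F.tendsto_atTop_of_leadingCoeff_nonneg hFdeg (by rw [hFlead]; exact hlead.le)
    have hev : ∀ᶠ y in atTop, 0 < F.eval y := htop.eventually_gt_atTop 0
    have hneg : Tendsto (fun x : ℝ => -x) atBot atTop := tendsto_neg_atBot_atTop
    filter_upwards [hneg.eventually hev] with x hx
    have : F.eval (-x) = (-1:ℝ)^d * D.eval x := by
      rw [hF, hE]
      simp
    rwa [this] at hx


lemma deriv_eval_formula (q : ℝ[X]) (N : ℕ) (hq : q.natDegree < N + 1) (x : ℝ) :
    q.derivative.eval x = ∑ m ∈ Finset.range (N+1), q.coeff m * m * x^(m-1) := by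
  conv_lhs => rw [q.as_sum_range' (N+1) hq]
  rw [derivative_sum, eval_finset_sum]
  exact Finset.sum_congr rfl fun m _ => by
    rw [derivative_monomial, eval_monomial]


/-- For the monic polynomial
`P_t(λ) = λ^n + (a₁ t + b₁) λ^{n-1} + ⋯ + (a_n t + b_n)` with `a₁ > 0`, there
are `λ₀` and `T` such that for all `t > T`, `P_t` has at most one real root
(counted with multiplicity) in `(-∞, λ₀)`. -/
theorem at_most_one_small_root (n : ℕ) (hn : 1 ≤ n) (a b : ℕ → ℝ)
    (ha : 0 < a 1) :
    ∃ lam0 T : ℝ, ∀ t, T < t →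
      Multiset.card
        (((X ^ n + ∑ k ∈ Finset.Icc 1 n,
            C (a k * t + b k) * X ^ (n - k) : ℝ[X])).roots.filter
          (fun r => r < lam0)) ≤ 1 := by
  classical
  set A : ℝ[X] := ∑ k ∈ Finset.Icc 1 n, C (a k) * X ^ (n - k) with hA
  set B : ℝ[X] := X ^ n + ∑ k ∈ Finset.Icc 1 n, C (b k) * X ^ (n - k) with hB
  -- coefficient of A at n-1
  have hAcoeff : A.coeff (n-1) = a 1 := by
    rw [hA, finset_sum_coeff]
    rw [Finset.sum_eq_single_of_mem 1 (Finset.mem_Icc.mpr ⟨le_refl 1, hn⟩)]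
    · rw [coeff_C_mul, coeff_X_pow, if_pos rfl, mul_one]
    · intro k hk hk1
      rw [Finset.mem_Icc] at hk
      rw [coeff_C_mul, coeff_X_pow, if_neg (by omega), mul_zero]
  have hAdeg : A.natDegree ≤ n - 1 := by
    apply natDegree_sum_le_of_forall_le
    intro k hk
    rw [Finset.mem_Icc] at hk
    calc (C (a k) * X ^ (n - k)).natDegree ≤ (X ^ (n-k) : ℝ[X]).natDegree :=
          natDegree_C_mul_le _ _
      _ ≤ n - 1 := by rw [natDegree_X_pow]; omega
  -- hasseDeriv facts
  have hDcoeff : ∀ m < n, ((hasseDeriv m A).coeff (n-1-m)) = ((n-1).choose m : ℝ) * a 1 := by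
    intro m hm
    rw [hasseDeriv_coeff]
    have h1 : n - 1 - m + m = n - 1 := by omega
    rw [h1, hAcoeff]
  have hDdeg : ∀ m < n, (hasseDeriv m A).natDegree = n - 1 - m := by
    intro m hm
    apply le_antisymm
    · calc (hasseDeriv m A).natDegree ≤ A.natDegree - m := natDegree_hasseDeriv_le _ _
        _ ≤ n - 1 - m := by omega
    · apply le_natDegree_of_ne_zero
      rw [hDcoeff m hm]
      have : (0:ℝ) < ((n-1).choose m : ℝ) :=
        by exact_mod_cast Nat.choose_pos (by omega : m ≤ n - 1)
      positivity
  have hDpos : ∀ m < n, 0 < (hasseDeriv m A).coeff (n-1-m) := by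
    intro m hm
    rw [hDcoeff m hm]
    have : (0:ℝ) < ((n-1).choose m : ℝ) :=
      by exact_mod_cast Nat.choose_pos (by omega : m ≤ n - 1)
    positivity
  -- choose lam0
  have hev : ∀ᶠ x in atBot, ∀ m ∈ Finset.range n,
      0 < (-1:ℝ)^(n-1-m) * (hasseDeriv m A).eval x := by
    rw [Filter.eventually_all_finset]
    intro m hm
    rw [Finset.mem_range] at hm
    exact neg_inf_sign _ _ (hDdeg m hm) (hDpos m hm)
  obtain ⟨lam0, hlam0⟩ := (eventually_atBot).mp hev
  have hα : ∀ m < n, 0 < (-1:ℝ)^(n-1-m) * (hasseDeriv m A).eval lam0 := by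
    intro m hm
    exact hlam0 lam0 le_rfl m (Finset.mem_range.mpr hm)
  -- choose T
  have hevT : ∀ᶠ t in atTop, ∀ m ∈ Finset.range n,
      0 < (-1:ℝ)^(n-1-m) * ((hasseDeriv m B).eval lam0 + t * (hasseDeriv m A).eval lam0) := by
    rw [Filter.eventually_all_finset]
    intro m hm
    rw [Finset.mem_range] at hm
    have h1 : Tendsto (fun t : ℝ =>
        ((-1:ℝ)^(n-1-m) * (hasseDeriv m A).eval lam0) * t
          + (-1:ℝ)^(n-1-m) * (hasseDeriv m B).eval lam0) atTop atTop := by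
      apply tendsto_atTop_add_const_right
      exact Tendsto.const_mul_atTop (hα m hm) tendsto_id
    have h2 := h1.eventually_gt_atTop 0
    filter_upwards [h2] with t h2
    calc (0:ℝ) < ((-1:ℝ)^(n-1-m) * (hasseDeriv m A).eval lam0) * t
          + (-1:ℝ)^(n-1-m) * (hasseDeriv m B).eval lam0 := h2
      _ = (-1:ℝ)^(n-1-m) * ((hasseDeriv m B).eval lam0 + t * (hasseDeriv m A).eval lam0) := by
          ring
  obtain ⟨T, hT⟩ := (eventually_atTop).mp hevT
  refine ⟨lam0, T, ?_⟩
  intro t ht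
  have hγ : ∀ m < n,
      0 < (-1:ℝ)^(n-1-m) * ((hasseDeriv m B).eval lam0 + t * (hasseDeriv m A).eval lam0) :=
    fun m hm => hT t ht.le m (Finset.mem_range.mpr hm)
  set p : ℝ[X] := X ^ n + ∑ k ∈ Finset.Icc 1 n, C (a k * t + b k) * X ^ (n - k) with hp_def
  -- decomposition
  have hdecomp : p = B + t • A := by
    rw [hp_def, hB, hA, Finset.smul_sum, add_assoc, ← Finset.sum_add_distrib]
    congr 1
    apply Finset.sum_congr rfl
    intro k hk
    rw [Polynomial.smul_eq_C_mul, C_add, C_mul]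
    ring
  -- hasseDeriv of p evaluated at lam0
  have hγval : ∀ m : ℕ, (hasseDeriv m p).eval lam0
      = (hasseDeriv m B).eval lam0 + t * (hasseDeriv m A).eval lam0 := by
    intro m
    rw [hdecomp, map_add, LinearMap.map_smul, eval_add, eval_smul, smul_eq_mul]
  -- degree facts for p
  have hsumdeg : (∑ k ∈ Finset.Icc 1 n, C (a k * t + b k) * X ^ (n - k) : ℝ[X]).degree
      < (X ^ n : ℝ[X]).degree := by
    rw [degree_X_pow]
    apply lt_of_le_of_lt (degree_le_natDegree)
    have hd : (∑ k ∈ Finset.Icc 1 n, C (a k * t + b k) * X ^ (n - k) : ℝ[X]).natDegree ≤ n - 1 := by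
      apply natDegree_sum_le_of_forall_le
      intro k hk
      rw [Finset.mem_Icc] at hk
      calc (C (a k * t + b k) * X ^ (n - k)).natDegree
          ≤ (X ^ (n-k) : ℝ[X]).natDegree := natDegree_C_mul_le _ _
        _ ≤ n - 1 := by rw [natDegree_X_pow]; omega
    calc ((∑ k ∈ Finset.Icc 1 n, C (a k * t + b k) * X ^ (n - k) : ℝ[X]).natDegree : WithBot ℕ)
        ≤ ((n - 1 : ℕ) : WithBot ℕ) := by exact_mod_cast hd
      _ < (n : WithBot ℕ) := by exact_mod_cast (by omega : n - 1 < n)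
  have hpdeg : p.degree = n := by
    rw [hp_def, degree_add_eq_left_of_degree_lt hsumdeg, degree_X_pow]
  have hpnatdeg : p.natDegree = n := natDegree_eq_of_degree_eq_some hpdeg
  have hpmonic : p.Monic := by
    rw [hp_def]
    exact monic_X_pow_add (by rwa [degree_X_pow] at hsumdeg)
  have hpne : p ≠ 0 := hpmonic.ne_zero
  -- taylor expansion
  set q : ℝ[X] := taylor lam0 p with hq_def
  have hqdeg : q.natDegree = n := by rw [hq_def, natDegree_taylor, hpnatdeg]
  have hqcoeff : ∀ m : ℕ, q.coeff m = (hasseDeriv m p).eval lam0 := fun m => by rw [hq_def, taylor_coeff]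
  have hqtop : q.coeff n = 1 := by
    have h1 : q.coeff n = q.leadingCoeff := by rw [leadingCoeff, hqdeg]
    rw [h1, hq_def, taylor_apply, leadingCoeff_comp (by rw [natDegree_X_add_C]; omega)]
    rw [hpmonic.leadingCoeff, leadingCoeff_X_add_C, one_pow, one_mul]
  set Cf : ℕ → ℝ := fun m => (-1:ℝ)^(n-1) * ((-1:ℝ)^m * q.coeff m) with hCf
  have hCn : Cf n = -1 := by
    obtain ⟨j, rfl⟩ : ∃ j, n = j + 1 := ⟨n - 1, by omega⟩
    have hjj : (-1:ℝ)^j * (-1:ℝ)^j = 1 := by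
      rw [← pow_add]
      exact Even.neg_one_pow ⟨j, rfl⟩
    simp only [hCf, hqtop, Nat.add_sub_cancel, pow_succ, mul_one]
    nlinarith [hjj]
  have hCpos : ∀ m < n, 0 < Cf m := by
    intro m hm
    have hsign : (-1:ℝ)^(n-1) * (-1:ℝ)^m = (-1:ℝ)^(n-1-m) := by
      rw [← pow_add]
      have h1 : (n-1) + m = (n-1-m) + 2*m := by omega
      rw [h1, pow_add, pow_mul]
      simp
    have := hγ m hm
    rw [← hγval m, ← hqcoeff m] at this
    calc (0:ℝ) < (-1:ℝ)^(n-1-m) * q.coeff m := this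
      _ = Cf m := by simp only [hCf]; rw [← hsign]; ring
  -- evaluation identity
  have Hval : ∀ s : ℝ, ∑ m ∈ Finset.range (n+1), Cf m * s^m
      = (-1:ℝ)^(n-1) * p.eval (lam0 - s) := by
    intro s
    have h1 : p.eval (lam0 - s) = q.eval (-s) := by
      have h2 : -s = (lam0 - s) - lam0 := by ring
      rw [h2, hq_def, taylor_eval_sub]
    rw [h1, eval_eq_sum_range, hqdeg, Finset.mul_sum]
    apply Finset.sum_congr rfl
    intro m hm
    simp only [hCf]
    rw [neg_pow s m]
    ring
  -- condition (2): uniqueness of roots below lam0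
  have huniq : ∀ r1 r2 : ℝ, r1 < r2 → r2 < lam0 → p.IsRoot r1 → p.IsRoot r2 → False := by
    intro r1 r2 h12 h2l hR1 hR2
    set u := lam0 - r1 with hu
    set v := lam0 - r2 with hv
    have hv0 : 0 < v := by simp [hv]; linarith
    have hvu : v < u := by simp [hu, hv]; linarith
    have hHu : ∑ m ∈ Finset.range (n+1), Cf m * u^m = 0 := by
      rw [Hval u]
      have : lam0 - u = r1 := by rw [hu]; ring
      rw [this, hR1, mul_zero]
    have hHv : ∑ m ∈ Finset.range (n+1), Cf m * v^m = 0 := by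
      rw [Hval v]
      have : lam0 - v = r2 := by rw [hv]; ring
      rw [this, hR2, mul_zero]
    have := sum_ineq n hn Cf hCn (fun m hm => (hCpos m hm).le) (hCpos 0 hn) u v hv0 hvu
    rw [hHu, hHv] at this
    simp at this
  -- condition (1): roots below lam0 are simple
  have hsimple : ∀ r : ℝ, r < lam0 → p.IsRoot r → ¬ p.derivative.IsRoot r := by
    intro r hr hR hD
    set s := lam0 - r with hs
    have hs0 : 0 < s := by simp [hs]; linarith
    have hroot : ∑ m ∈ Finset.range (n+1), Cf m * s^m = 0 := by
      rw [Hval s]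
      have : lam0 - s = r := by rw [hs]; ring
      rw [this, hR, mul_zero]
    have hG := deriv_sum_neg n hn Cf hCn (fun m hm => (hCpos m hm).le) (hCpos 0 hn) s hs0 hroot
    -- derivative of q
    have hqd : q.derivative = (p.derivative).comp (X + C lam0) := by
      rw [hq_def, taylor_apply, derivative_comp]
      simp
    have hqde : q.derivative.eval (-s) = p.derivative.eval r := by
      rw [hqd, eval_comp]
      congr 1
      simp only [eval_add, eval_X, eval_C, hs]
      ring
    have hzero : q.derivative.eval (-s) = 0 := by rw [hqde]; exact hD
    rw [deriv_eval_formula q n (by omega) (-s)] at hzero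
    have hGeq : ∑ m ∈ Finset.range (n+1), (m : ℝ) * Cf m * s ^ m
        = (-1:ℝ)^(n-1) * (-s) * ∑ m ∈ Finset.range (n+1), q.coeff m * m * (-s)^(m-1) := by
      rw [Finset.mul_sum]
      apply Finset.sum_congr rfl
      intro m hm
      cases m with
      | zero => simp
      | succ j =>
        have e1 : (-s:ℝ)^j = (-1:ℝ)^j * s^j := neg_pow s j
        simp only [hCf, Nat.add_sub_cancel]
        rw [e1]
        push_cast
        ring
    rw [hGeq, hzero, mul_zero] at hG
    exact lt_irrefl 0 hG
  -- conclude
  have h2 : ∀ r s : ℝ, r < lam0 → s < lam0 → p.IsRoot r → p.IsRoot s → r = s := by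
    intro r s hr hs hRr hRs
    rcases lt_trichotomy r s with h | h | h
    · exact absurd (huniq r s h hs hRr hRs) (by simp)
    · exact h
    · exact absurd (huniq s r h hr hRs hRr) (by simp)
  exact key_count p hpne lam0 hsimple h2
end

section
/- Budan–Fourier bound: Let P be a real polynomial of degree n and for x ∈ ℝ let ν_P(x) denote the number of sign changes in the sequence (P(x), P'(x), ..., P^{(n)}(x)) (ignoring zeros). Then for a < b, the number of roots of P in (a, b], counted with multiplicity, is at most ν_P(a) − ν_P(b). -/
open Polynomial

/-- The number of sign changes in a finite sequence of reals, counted after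
deleting zero entries. -/
noncomputable def signChanges (l : List ℝ) : ℕ :=
  let s := l.filter (fun x => x ≠ 0)
  (s.zip s.tail).countP (fun p => p.1 * p.2 < 0)

/-!
Just to the right of any point `c`, each `P⁽ᵏ⁾` has the sign of the first nonzero entry of
`(P⁽ᵏ⁾(c), …, P⁽ⁿ⁾(c))`, so the sign pattern, and hence `ν_P`, is the same as at `c`. Just to the
left of a root of multiplicity `m`, the mean value theorem forces `P` and `P'` to have opposite
signs, and induction on the degree shows that `ν_P` exceeds `ν_P(c)` by at least `m` there.
So `y ↦ ν_P(y) + #{roots in (a, y]}` (with `ν_P = fourierVar P`) can only decrease locally,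
hence decreases on `[a, b]`.
-/

open Filter Topology Set

-- `headI []` is `0`, the value used when every entry vanishes.
noncomputable def firstNonzero (l : List ℝ) : ℝ :=
  (l.filter (fun x => x ≠ 0)).headI

lemma firstNonzero_cons (a : ℝ) (l : List ℝ) :
    firstNonzero (a :: l) = if a = 0 then firstNonzero l else a := by
  by_cases ha : a = 0 <;> simp [firstNonzero, ha]

lemma signChanges_cons (a : ℝ) (l : List ℝ) :
    signChanges (a :: l) = (if a * firstNonzero l < 0 then 1 else 0) + signChanges l := by
  by_cases ha : a = 0
  · simp [signChanges, ha]
  · have hf : (a :: l).filter (fun x => x ≠ 0) = a :: l.filter (fun x => x ≠ 0) :=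
      List.filter_cons_of_pos (by simpa using ha)
    have hzip (s : List ℝ) : ((a :: s).zip s).countP (fun p => p.1 * p.2 < 0) =
        (if a * s.headI < 0 then 1 else 0) + (s.zip s.tail).countP (fun p => p.1 * p.2 < 0) := by
      cases s with
      | nil => simp [show (default : ℝ) = 0 from rfl]
      | cons b s =>
        simp only [List.zip_cons_cons, List.countP_cons, List.headI_cons, List.tail_cons,
          decide_eq_true_eq, add_comm]
        congr 1
    simp only [signChanges, firstNonzero, hf, List.tail_cons]
    exact hzip _

noncomputable def fourierSeq (P : ℝ[X]) (x : ℝ) : List ℝ :=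
  List.ofFn fun i : Fin (P.natDegree + 1) => (derivative^[i] P).eval x

noncomputable def fourierVar (P : ℝ[X]) (x : ℝ) : ℕ :=
  signChanges (fourierSeq P x)

lemma fourierSeq_C (a x : ℝ) : fourierSeq (C a) x = [a] := by
  simp [fourierSeq]

lemma firstNonzero_fourierSeq_of_eval_ne_zero {P : ℝ[X]} {x : ℝ} (h : P.eval x ≠ 0) :
    firstNonzero (fourierSeq P x) = P.eval x := by
  simp [fourierSeq, List.ofFn_succ, firstNonzero_cons, h]

lemma fourierSeq_of_natDegree_eq_succ {P : ℝ[X]} {m : ℕ} (h : P.natDegree = m + 1) (x : ℝ) :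
    fourierSeq P x = P.eval x :: fourierSeq (derivative P) x := by
  have h' : (derivative P).natDegree = m := by simp [h]
  rw [fourierSeq, fourierSeq, h, h', List.ofFn_succ]
  simp [Function.iterate_succ_apply]

lemma fourierVar_of_natDegree_eq_succ {P : ℝ[X]} {m : ℕ} (h : P.natDegree = m + 1) (x : ℝ) :
    fourierVar P x = (if P.eval x * firstNonzero (fourierSeq (derivative P) x) < 0 then 1 else 0)
      + fourierVar (derivative P) x := by
  rw [fourierVar, fourierSeq_of_natDegree_eq_succ h, signChanges_cons, fourierVar]

lemma mul_neg_iff_mul_neg_of_mul_pos {s t u v : ℝ} (hu : 0 < s * u) (hv : 0 < t * v) :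
    u * v < 0 ↔ s * t < 0 :=
  neg_iff_neg_of_mul_pos (by nlinarith [mul_pos hu hv])

lemma eventually_nhdsGT_pos_of_deriv_pos {f : ℝ → ℝ} {c : ℝ} (hf : Differentiable ℝ f)
    (hc : f c = 0) (h : ∀ᶠ x in 𝓝[>] c, 0 < deriv f x) : ∀ᶠ x in 𝓝[>] c, 0 < f x := by
  obtain ⟨d, hcd, hd⟩ := mem_nhdsGT_iff_exists_Ioo_subset.1 h
  have hmono : StrictMonoOn f (Icc c d) :=
    strictMonoOn_of_deriv_pos (convex_Icc c d) hf.continuous.continuousOn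
      fun x hx => hd (by rwa [interior_Icc] at hx)
  filter_upwards [Ioo_mem_nhdsGT hcd] with x hx
  simpa [hc] using hmono (left_mem_Icc.2 hcd.le) (Ioo_subset_Icc_self hx) hx.1

lemma eventually_nhdsLT_neg_of_deriv_pos {f : ℝ → ℝ} {c : ℝ} (hf : Differentiable ℝ f)
    (hc : f c = 0) (h : ∀ᶠ x in 𝓝[<] c, 0 < deriv f x) : ∀ᶠ x in 𝓝[<] c, f x < 0 := by
  obtain ⟨d, hdc, hd⟩ := mem_nhdsLT_iff_exists_Ioo_subset.1 h
  have hmono : StrictMonoOn f (Icc d c) :=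
    strictMonoOn_of_deriv_pos (convex_Icc d c) hf.continuous.continuousOn
      fun x hx => hd (by rwa [interior_Icc] at hx)
  filter_upwards [Ioo_mem_nhdsLT hdc] with x hx
  simpa [hc] using hmono (Ioo_subset_Icc_self hx) (right_mem_Icc.2 hdc.le) hx.2

lemma eventually_eval_mul_eval_pos {P : ℝ[X]} {c : ℝ} (h : P.eval c ≠ 0) :
    ∀ᶠ x in 𝓝 c, 0 < P.eval c * P.eval x :=
  continuousAt_const.eventually_lt (by fun_prop) (mul_self_pos.2 h)

theorem eventually_nhdsGT_fourierVar {P : ℝ[X]} (hP : P ≠ 0) (c : ℝ) :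
    ∀ᶠ x in 𝓝[>] c, 0 < firstNonzero (fourierSeq P c) * P.eval x ∧
      fourierVar P x = fourierVar P c := by
  obtain ⟨n, hn⟩ : ∃ n, P.natDegree = n := ⟨_, rfl⟩
  induction n generalizing P with
  | zero =>
    rw [eq_C_of_natDegree_eq_zero hn] at hP ⊢
    simp [fourierVar, fourierSeq_C, firstNonzero, mul_self_pos, C_ne_zero.1 hP]
  | succ m ih =>
    have ihQ := ih (P := derivative P) (derivative_ne_zero.2 (by omega)) (by simp [hn])
    have hfirst : ∀ᶠ x in 𝓝[>] c,
        firstNonzero (fourierSeq (derivative P) x) = (derivative P).eval x :=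
      ihQ.mono fun x hx => firstNonzero_fourierSeq_of_eval_ne_zero (right_ne_zero_of_mul hx.1.ne')
    simp only [fourierVar_of_natDegree_eq_succ hn]
    rw [fourierSeq_of_natDegree_eq_succ hn, firstNonzero_cons]
    set f := firstNonzero (fourierSeq (derivative P) c)
    by_cases hc : P.eval c = 0
    · have hsign : ∀ᶠ x in 𝓝[>] c, 0 < f * P.eval x :=
        eventually_nhdsGT_pos_of_deriv_pos (f := fun x => f * P.eval x) (by fun_prop)
          (by simp [hc]) (by simpa using ihQ.mono fun x hx => hx.1)
      filter_upwards [ihQ, hsign, hfirst] with x ⟨hQx, hvar⟩ hPx hfx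
      have hsame : ¬ P.eval x * (derivative P).eval x < 0 :=
        (mul_neg_iff_mul_neg_of_mul_pos hPx hQx).not.2 (mul_self_nonneg f).not_gt
      refine ⟨by rwa [if_pos hc], ?_⟩
      simp only [hc, zero_mul, lt_irrefl, if_false, hfx, hsame, hvar]
    · filter_upwards [ihQ, hfirst, nhdsWithin_le_nhds (eventually_eval_mul_eval_pos hc)]
        with x ⟨hQx, hvar⟩ hfx hPx
      refine ⟨by rwa [if_neg hc], ?_⟩
      simp only [hfx, hvar, mul_neg_iff_mul_neg_of_mul_pos hPx hQx]

theorem eventually_nhdsLT_fourierVar {P : ℝ[X]} (hP : P ≠ 0) (c : ℝ) :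
    ∀ᶠ x in 𝓝[<] c,
      0 < (-1) ^ rootMultiplicity c P * firstNonzero (fourierSeq P c) * P.eval x ∧
      fourierVar P c + rootMultiplicity c P ≤ fourierVar P x := by
  obtain ⟨n, hn⟩ : ∃ n, P.natDegree = n := ⟨_, rfl⟩
  induction n generalizing P with
  | zero =>
    rw [eq_C_of_natDegree_eq_zero hn] at hP ⊢
    simp [fourierVar, fourierSeq_C, firstNonzero, mul_self_pos, C_ne_zero.1 hP]
  | succ m ih =>
    have ihQ := ih (P := derivative P) (derivative_ne_zero.2 (by omega)) (by simp [hn])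
    have hfirst : ∀ᶠ x in 𝓝[<] c,
        firstNonzero (fourierSeq (derivative P) x) = (derivative P).eval x :=
      ihQ.mono fun x hx => firstNonzero_fourierSeq_of_eval_ne_zero (right_ne_zero_of_mul hx.1.ne')
    simp only [fourierVar_of_natDegree_eq_succ hn]
    rw [fourierSeq_of_natDegree_eq_succ hn, firstNonzero_cons]
    set k := rootMultiplicity c (derivative P)
    set f := firstNonzero (fourierSeq (derivative P) c)
    by_cases hc : P.eval c = 0
    · have hmult : rootMultiplicity c P = k + 1 := by
        have := derivative_rootMultiplicity_of_root hc
        have := (rootMultiplicity_pos hP).2 hc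
        omega
      have hsign : ∀ᶠ x in 𝓝[<] c, 0 < -((-1) ^ k * f) * P.eval x := by
        have := eventually_nhdsLT_neg_of_deriv_pos (c := c) (f := fun x => (-1) ^ k * f * P.eval x)
          (by fun_prop) (by simp [hc]) (by simpa using ihQ.mono fun x hx => hx.1)
        exact this.mono fun x hx => by linarith
      filter_upwards [ihQ, hsign, hfirst] with x ⟨hQx, hvar⟩ hPx hfx
      have hopp : P.eval x * (derivative P).eval x < 0 := by
        rw [mul_neg_iff_mul_neg_of_mul_pos hPx hQx, neg_mul, neg_lt_zero]
        exact mul_self_pos.2 (left_ne_zero_of_mul hQx.ne')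
      refine ⟨by rw [if_pos hc, hmult, pow_succ]; linarith, ?_⟩
      simp only [hc, zero_mul, lt_irrefl, if_false, hfx, hopp, if_true, hmult]
      omega
    · filter_upwards [ihQ, hfirst, nhdsWithin_le_nhds (eventually_eval_mul_eval_pos hc)]
        with x ⟨hQx, hvar⟩ hfx hPx
      simp only [if_neg hc, hfx, rootMultiplicity_eq_zero hc, pow_zero, one_mul, add_zero]
      refine ⟨hPx, ?_⟩
      rcases Nat.eq_zero_or_pos k with hk | hk
      · rw [hk, pow_zero, one_mul] at hQx
        simp only [mul_neg_iff_mul_neg_of_mul_pos hPx hQx]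
        omega
      · split_ifs <;> omega

lemma eventually_nhdsGT_forall_mem_lt (s : Multiset ℝ) (c : ℝ) :
    ∀ᶠ x in 𝓝[>] c, ∀ r ∈ s, c < r → x < r := by
  have h : ∀ r ∈ s.toFinset, ∀ᶠ x in 𝓝[>] c, c < r → x < r := fun r _ => by
    by_cases hcr : c < r
    · exact (eventually_nhdsWithin_of_eventually_nhds (eventually_lt_nhds hcr)).mono
        fun x hx _ => hx
    · exact Eventually.of_forall fun x h => absurd h hcr
  simpa using (eventually_all_finset _).2 h

lemma eventually_nhdsLT_forall_mem_lt (s : Multiset ℝ) (c : ℝ) :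
    ∀ᶠ x in 𝓝[<] c, ∀ r ∈ s, r < c → r < x := by
  have h : ∀ r ∈ s.toFinset, ∀ᶠ x in 𝓝[<] c, r < c → r < x := fun r _ => by
    by_cases hrc : r < c
    · exact (eventually_nhdsWithin_of_eventually_nhds (eventually_gt_nhds hrc)).mono
        fun x hx _ => hx
    · exact Eventually.of_forall fun x h => absurd h hrc
  simpa using (eventually_all_finset _).2 h

lemma eventually_nhdsGT_filter_Ioc_eq (s : Multiset ℝ) (a c : ℝ) :
    ∀ᶠ x in 𝓝[>] c, s.filter (fun r => a < r ∧ r ≤ x) = s.filter (fun r => a < r ∧ r ≤ c) := by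
  filter_upwards [eventually_nhdsGT_forall_mem_lt s c, self_mem_nhdsWithin] with x hx hcx
  exact Multiset.filter_congr fun r hr => and_congr_right fun _ =>
    ⟨fun hrx => not_lt.1 fun hcr => (hx r hr hcr).not_ge hrx, fun hrc => hrc.trans hcx.le⟩

lemma eventually_nhdsLT_card_filter_Ioc (s : Multiset ℝ) {a c : ℝ} (hac : a < c) :
    ∀ᶠ x in 𝓝[<] c, Multiset.card (s.filter fun r => a < r ∧ r ≤ c) =
      Multiset.card (s.filter fun r => a < r ∧ r ≤ x) + s.count c := by
  filter_upwards [eventually_nhdsLT_forall_mem_lt s c, Ioo_mem_nhdsLT hac] with x hx hxc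
  have hdisj : s.filter (fun r => (a < r ∧ r ≤ x) ∧ c = r) = 0 :=
    Multiset.filter_eq_nil.2 fun r _ h => (h.2 ▸ h.1.2).not_gt hxc.2
  rw [Multiset.count_eq_card_filter_eq, ← Multiset.card_add, Multiset.filter_add_filter, hdisj,
    add_zero]
  congr 1
  refine Multiset.filter_congr fun r hr => ⟨fun ⟨har, hrc⟩ => ?_, ?_⟩
  · rcases hrc.lt_or_eq with hrc | hrc
    · exact Or.inl ⟨har, (hx r hr hrc).le⟩
    · exact Or.inr hrc.symm
  · rintro (⟨har, hrx⟩ | rfl)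
    · exact ⟨har, hrx.trans hxc.2.le⟩
    · exact ⟨hac, le_rfl⟩

theorem le_of_forall_eventually_nhdsGT_le_of_forall_eventually_nhdsLT_le {α β : Type*}
    [ConditionallyCompleteLinearOrder α] [TopologicalSpace α] [OrderTopology α]
    [DenselyOrdered α] [Preorder β] {g : α → β} {a b : α} (hab : a ≤ b)
    (hright : ∀ c ∈ Ico a b, ∀ᶠ x in 𝓝[>] c, g x ≤ g c)
    (hleft : ∀ c ∈ Ioc a b, ∀ᶠ x in 𝓝[<] c, g c ≤ g x) : g b ≤ g a := by
  set A := {t ∈ Icc a b | ∀ z ∈ Icc a t, g z ≤ g a}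
  have haA : a ∈ A := ⟨⟨le_rfl, hab⟩, fun z hz => by rw [le_antisymm hz.2 hz.1]⟩
  have hbdd : BddAbove A := ⟨b, fun t ht => ht.1.2⟩
  set t := sSup A with ht
  clear_value t
  have hat : a ≤ t := ht ▸ le_csSup hbdd haA
  have htb : t ≤ b := ht ▸ csSup_le ⟨a, haA⟩ fun s hs => hs.1.2
  have below : ∀ z ∈ Ico a t, g z ≤ g a := fun z hz => by
    obtain ⟨s, hs, hzs⟩ := exists_lt_of_lt_csSup ⟨a, haA⟩ (ht ▸ hz.2)
    exact hs.2 z ⟨hz.1, hzs.le⟩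
  have upto : ∀ z ∈ Icc a t, g z ≤ g a := by
    intro z hz
    rcases hz.2.lt_or_eq with hzt | rfl
    · exact below z ⟨hz.1, hzt⟩
    rcases hz.1.eq_or_lt with rfl | haz
    · exact le_rfl
    obtain ⟨l, hl, hlz⟩ := (mem_nhdsLT_iff_exists_Ioo_subset' haz).1 (hleft _ ⟨haz, htb⟩)
    obtain ⟨x, hx, hxz⟩ := exists_between (max_lt hl haz)
    exact (hlz ⟨(le_max_left _ _).trans_lt hx, hxz⟩).trans
      (below x ⟨(le_max_right _ _).trans hx.le, hxz⟩)
  obtain htb | htb := htb.lt_or_eq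
  · obtain ⟨u, hu, htu⟩ := (mem_nhdsGT_iff_exists_Ioo_subset' htb).1 (hright t ⟨hat, htb⟩)
    obtain ⟨s, hts, hs⟩ := exists_between (lt_min hu htb)
    have hsA : s ∈ A := by
      refine ⟨⟨hat.trans hts.le, hs.le.trans (min_le_right _ _)⟩, fun z hz => ?_⟩
      rcases le_or_gt z t with hzt | hzt
      · exact upto z ⟨hz.1, hzt⟩
      · exact (htu ⟨hzt, hz.2.trans_lt (hs.trans_le (min_le_left _ _))⟩).trans
          (upto t ⟨hat, le_rfl⟩)
    exact absurd (ht ▸ le_csSup hbdd hsA) hts.not_ge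
  · rw [← htb]
    exact upto t ⟨hat, le_rfl⟩

theorem card_roots_Ioc_add_fourierVar_le {P : ℝ[X]} (hP : P ≠ 0) {a b : ℝ} (hab : a ≤ b) :
    Multiset.card (P.roots.filter fun r => a < r ∧ r ≤ b) + fourierVar P b ≤ fourierVar P a := by
  have key := le_of_forall_eventually_nhdsGT_le_of_forall_eventually_nhdsLT_le
    (g := fun y => Multiset.card (P.roots.filter fun r => a < r ∧ r ≤ y) + fourierVar P y) hab
    (fun c _ => by
      filter_upwards [eventually_nhdsGT_filter_Ioc_eq P.roots a c,
        eventually_nhdsGT_fourierVar hP c] with x hroots hvar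
      rw [hroots, hvar.2])
    (fun c hc => by
      filter_upwards [eventually_nhdsLT_card_filter_Ioc P.roots hc.1,
        eventually_nhdsLT_fourierVar hP c] with x hroots hvar
      rw [hroots, count_roots]
      omega)
  have hempty : P.roots.filter (fun r => a < r ∧ r ≤ a) = 0 :=
    Multiset.filter_eq_nil.2 fun r _ h => (h.1.trans_le h.2).false
  simpa [hempty] using key

/-- Budan–Fourier bound: for a real polynomial `P` of degree `n`, the number of
roots of `P` in `(a, b]`, counted with multiplicity, is at most
`ν_P(a) - ν_P(b)`, where `ν_P(x)` is the number of sign changes in the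
sequence `(P(x), P'(x), …, P⁽ⁿ⁾(x))`. -/
theorem budan_fourier (n : ℕ) (P : ℝ[X]) (hP0 : P ≠ 0) (hP : P.natDegree = n)
    (a b : ℝ) (hab : a < b) :
    (Multiset.card (P.roots.filter (fun r => a < r ∧ r ≤ b)) : ℤ) ≤
      (signChanges (List.ofFn fun i : Fin (n + 1) =>
          (Polynomial.derivative^[i.1] P).eval a) : ℤ) -
        (signChanges (List.ofFn fun i : Fin (n + 1) =>
          (Polynomial.derivative^[i.1] P).eval b) : ℤ) := by
  subst hP
  have h := card_roots_Ioc_add_fourierVar_le hP0 hab.le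
  unfold fourierVar fourierSeq at h
  omega
end

section
/- Let n ≥ 1, a_k, b_k ∈ ℝ with a₁ ≠ 0, and suppose x₁(t),...,x_n(t) are continuous real functions on an unbounded interval with (-1)^k e_k(x₁(t),...,x_n(t)) = a_k t + b_k for k = 1,...,n. Then as t → ∞, exactly one of the functions x_i(t) tends to infinity in absolute value (i.e., |x_i(t)| → ∞ for exactly one index i, while the others remain bounded). -/
/-!
Write `c(t) = a₁ t + b₁`, so that `∑ xᵢ(t) = -c(t)`. The lower coefficients of the monic
polynomial `∏ (z - xᵢ(t))` are `O(c(t))`, and a root `y` with `|y| ≥ 1` of a monic polynomial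
satisfies `|y + c| |y| ≤ ∑ |lower coefficients|`. Hence for large `t` every root is either
bounded, `|y| ≤ R`, or close to `-c(t)`, `|y + c(t)| ≤ D`. If `m` roots are of the second kind,
summing all roots bounds `(m - 1) c(t)`, so `m = 1` once `|c(t)|` is large. Finally the large
root cannot change its index: by continuity no `|xᵢ|` can cross the gap `(R, |c(t)| - D)`.
-/

open Polynomial Filter Asymptotics Finset

theorem Polynomial.Monic.norm_add_nextCoeff_mul_norm_le_of_isRoot {K : Type*} [NormedField K]
    {p : K[X]} (hp : p.Monic) {y : K} (hy : p.IsRoot y) (h1 : 1 ≤ ‖y‖) :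
    ‖y + p.nextCoeff‖ * ‖y‖ ≤ ∑ m ∈ range (p.natDegree - 1), ‖p.coeff m‖ := by
  obtain ⟨k, hk⟩ : ∃ k, p.natDegree = k + 1 := Nat.exists_eq_succ_of_ne_zero fun h => by
    rw [hp.natDegree_eq_zero] at h
    simp [h] at hy
  have hroot : (y + p.coeff k) * y ^ k = -∑ m ∈ range k, p.coeff m * y ^ m := by
    have := hy.eq_zero
    rw [eval_eq_sum_range, hk, sum_range_succ, sum_range_succ, ← hk, hp.coeff_natDegree, hk] at this
    linear_combination this
  have hbound : ‖y + p.coeff k‖ * ‖y‖ * ‖y‖ ^ k ≤ (∑ m ∈ range k, ‖p.coeff m‖) * ‖y‖ ^ k :=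
    calc ‖y + p.coeff k‖ * ‖y‖ * ‖y‖ ^ k = ‖∑ m ∈ range k, p.coeff m * y ^ m‖ * ‖y‖ := by
          rw [← norm_neg (∑ m ∈ range k, p.coeff m * y ^ m), ← hroot, norm_mul, norm_pow]
          ring
      _ ≤ (∑ m ∈ range k, ‖p.coeff m‖ * ‖y‖ ^ m) * ‖y‖ := by
          gcongr
          exact (norm_sum_le _ _).trans_eq (by simp only [norm_mul, norm_pow])
      _ = ∑ m ∈ range k, ‖p.coeff m‖ * ‖y‖ ^ (m + 1) := by
          simp only [sum_mul, pow_succ, mul_assoc]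
      _ ≤ ∑ m ∈ range k, ‖p.coeff m‖ * ‖y‖ ^ k :=
          sum_le_sum fun m hm => by gcongr; exact mem_range.1 hm
      _ = _ := sum_mul .. |>.symm
  rw [nextCoeff_of_natDegree_pos (by omega), hk, Nat.add_sub_cancel]
  exact le_of_mul_le_mul_right hbound (pow_pos (by linarith) k)

theorem norm_le_or_norm_add_le_of_norm_add_mul_norm_le {E : Type*} [SeminormedAddCommGroup E]
    {y c : E} {K : ℝ} (hK : 0 ≤ K) (h : ‖y + c‖ * ‖y‖ ≤ K * ‖c‖) :
    ‖y‖ ≤ 2 * K ∨ ‖y + c‖ ≤ 2 * K := by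
  by_contra! ⟨hy, hyc⟩
  have htri : ‖c‖ ≤ ‖y + c‖ + ‖y‖ := by simpa using norm_sub_le (y + c) y
  nlinarith [mul_lt_mul'' (sub_lt_sub_right hyc K) (sub_lt_sub_right hy K) (by linarith)
    (by linarith), mul_nonneg hK hK]

theorem IsPreconnected.le_of_forall_le_or_le {α : Type*} [TopologicalSpace α] {S : Set α}
    (hS : IsPreconnected S) {f g : α → ℝ} {u : ℝ} (hf : ContinuousOn f S) (hg : ContinuousOn g S)
    (hgap : ∀ t ∈ S, f t ≤ u ∨ g t ≤ f t) (hug : ∀ t ∈ S, u < g t) {t₀ : α} (ht₀ : t₀ ∈ S)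
    (hft₀ : u < f t₀) : ∀ t ∈ S, g t ≤ f t := by
  intro t ht
  by_contra! hlt
  -- `f` would meet the midpoint `(u + g) / 2` of the gap
  have hmid₀ : (u + g t₀) / 2 ≤ f t₀ := by
    have := hug t₀ ht₀; have := (hgap t₀ ht₀).resolve_left hft₀.not_ge; linarith
  have hmid : f t ≤ (u + g t) / 2 := by
    have := hug t ht; have := (hgap t ht).resolve_right hlt.not_ge; linarith
  obtain ⟨s, hs, hfs⟩ := hS.intermediate_value₂ ht₀ ht ((continuousOn_const.add hg).div_const 2) hf
    hmid₀ hmid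
  have := hug s hs
  simp only [Pi.add_apply] at hfs
  rcases hgap s hs with h | h <;> linarith

theorem existsUnique_lt_norm_of_sum_eq_neg {ι E : Type*} [Fintype ι] [NormedAddCommGroup E]
    [NormedSpace ℝ E] {y : ι → E} {c : E} {R D : ℝ} (hsum : ∑ i, y i = -c)
    (hsplit : ∀ i, ‖y i‖ ≤ R ∨ ‖y i + c‖ ≤ D) (hc : Fintype.card ι * max R D < ‖c‖) :
    ∃! i, R < ‖y i‖ := by
  classical
  set B := univ.filter fun i => R < ‖y i‖
  have hshift : ∑ i, (y i + if R < ‖y i‖ then c else 0) = ((#B : ℝ) - 1) • c := by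
    rw [sum_add_distrib, hsum, ← sum_filter, sum_const, sub_smul, one_smul, Nat.cast_smul_eq_nsmul]
    abel
  have hbound : ‖((#B : ℝ) - 1) • c‖ ≤ Fintype.card ι * max R D := by
    rw [← hshift]
    refine (norm_sum_le _ _).trans ((sum_le_sum (g := fun _ => max R D) fun i _ => ?_).trans_eq
      (by simp))
    split_ifs with h
    · exact ((hsplit i).resolve_left h.not_ge).trans (le_max_right R D)
    · simpa using (not_lt.1 h).trans (le_max_left R D)
  have hB : #B = 1 := by
    by_contra hne
    have : (1 : ℝ) ≤ |(#B : ℝ) - 1| := by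
      rcases Nat.lt_or_gt_of_ne hne with h | h
      · simp [Nat.lt_one_iff.1 h]
      · have : (2 : ℝ) ≤ #B := by exact_mod_cast h
        rw [abs_of_nonneg] <;> linarith
    rw [norm_smul, Real.norm_eq_abs] at hbound
    nlinarith [norm_nonneg c]
  simpa [B] using card_eq_one_iff_existsUnique.1 hB

theorem isBigO_affine_atTop {a₁ b₁ : ℝ} (h : a₁ ≠ 0) (a b : ℝ) :
    (fun t => a * t + b) =O[atTop] fun t => a₁ * t + b₁ := by
  have := Polynomial.isBigO_atTop_of_degree_le (P := C a * X + C b) (Q := C a₁ * X + C b₁) (by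
    rw [degree_linear h]; exact degree_linear_le)
  simpa using this

theorem tendsto_abs_affine_atTop {a₁ : ℝ} (h : a₁ ≠ 0) (b₁ : ℝ) :
    Tendsto (fun t => |a₁ * t + b₁|) atTop atTop := by
  refine (Polynomial.abs_tendsto_atTop (C a₁ * X + C b₁) ?_).congr fun t => ?_
  · rw [degree_linear h]; norm_num
  · simp only [eval_add, eval_mul, eval_C, eval_X]

theorem eventually_abs_le_or_abs_add_le {n : ℕ} (hn : 1 ≤ n) {T : ℝ} {x : Fin n → ℝ → ℝ}
    {a b : ℕ → ℝ} (hcoef : ∀ t ∈ Set.Ioi T, ∀ k, 1 ≤ k → k ≤ n →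
      (∏ i, (X - C (x i t))).coeff (n - k) = a k * t + b k)
    (ha : a 1 ≠ 0) :
    ∃ R D : ℝ, ∀ᶠ t in atTop, ∀ j, |x j t| ≤ R ∨ |x j t + (a 1 * t + b 1)| ≤ D := by
  have hlower : (fun t => ∑ m ∈ range (n - 1), ‖a (n - m) * t + b (n - m)‖) =O[atTop]
      fun t => a 1 * t + b 1 :=
    IsBigO.fun_sum fun m _ => (isBigO_affine_atTop ha _ _).norm_left
  obtain ⟨K, hK, hKlower⟩ := hlower.exists_nonneg
  refine ⟨max 1 (2 * K), 2 * K, ?_⟩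
  filter_upwards [hKlower.bound, eventually_gt_atTop T] with t hlower_t ht j
  rcases lt_or_ge |x j t| 1 with hsmall | hlarge
  · exact Or.inl (hsmall.le.trans (le_max_left _ _))
  set p := ∏ i, (X - C (x i t))
  have hdeg : p.natDegree = n := by
    rw [natDegree_finsetProd_X_sub_C_eq_card, card_univ, Fintype.card_fin]
  have hnext : p.nextCoeff = a 1 * t + b 1 := by
    rw [nextCoeff_of_natDegree_pos (by omega), hdeg, hcoef t ht 1 le_rfl hn]
  have hlowcoeff : ∀ m ∈ range (n - 1), p.coeff m = a (n - m) * t + b (n - m) := fun m hm => by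
    simpa [Nat.sub_sub_self (by simp at hm; omega : m ≤ n)] using
      hcoef t ht (n - m) (by simp at hm; omega) (by omega)
  have hroot : p.IsRoot (x j t) := by
    simpa [p, IsRoot, eval_prod, prod_eq_zero_iff, sub_eq_zero] using ⟨j, rfl⟩
  have hbound := (monic_prod_of_monic _ _ fun i _ => monic_X_sub_C (x i t))
    |>.norm_add_nextCoeff_mul_norm_le_of_isRoot hroot hlarge
  rw [hnext, hdeg, sum_congr rfl fun m hm => by rw [hlowcoeff m hm]] at hbound
  have hsplit := norm_le_or_norm_add_le_of_norm_add_mul_norm_le hK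
    (hbound.trans ((le_abs_self _).trans hlower_t))
  simp only [Real.norm_eq_abs] at hsplit
  exact hsplit.imp_left fun h => h.trans (le_max_right _ _)

/-- If `x₁(t),…,x_n(t)` are continuous on `(T,∞)` and their signed elementary
symmetric functions (the coefficients of `∏ (z - x_i(t))`) are affine in `t`,
`a_k t + b_k`, with `a₁ ≠ 0`, then as `t → ∞` exactly one of the `x_i(t)`
tends to infinity in absolute value, while all the others remain bounded. -/
theorem exactly_one_unbounded_node (n : ℕ) (hn : 1 ≤ n) (T : ℝ)
    (x : Fin n → ℝ → ℝ) (a b : ℕ → ℝ)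
    (hcont : ∀ i, ContinuousOn (x i) (Set.Ioi T))
    (hcoef : ∀ t ∈ Set.Ioi T, ∀ k, 1 ≤ k → k ≤ n →
      (∏ i, (X - C (x i t))).coeff (n - k) = a k * t + b k)
    (ha : a 1 ≠ 0) :
    ∃ i : Fin n,
      Tendsto (fun t => |x i t|) atTop atTop ∧
      ∀ j, j ≠ i → ∃ C : ℝ, ∀ᶠ t in atTop, |x j t| ≤ C := by
  obtain ⟨R, D, hsplit⟩ := eventually_abs_le_or_abs_add_le hn hcoef ha
  have hc := tendsto_abs_affine_atTop ha (b 1)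
  obtain ⟨t₀, ht₀⟩ := eventually_atTop.1 <| (eventually_gt_atTop T).and <| hsplit.and <|
    (hc.eventually_gt_atTop (n * max R D)).and (hc.eventually_gt_atTop (R + D))
  have hsum : ∀ t ∈ Set.Ioi T, ∑ i, x i t = -(a 1 * t + b 1) := fun t ht => by
    have := prod_X_sub_C_coeff_card_pred (univ : Finset (Fin n)) (x · t) (by simp; omega)
    rw [card_univ, Fintype.card_fin, hcoef t ht 1 le_rfl hn] at this
    linarith
  have huniq : ∀ t ≥ t₀, ∃! i, R < |x i t| := fun t ht => by
    obtain ⟨hT, hs, hbig, -⟩ := ht₀ t ht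
    exact existsUnique_lt_norm_of_sum_eq_neg (hsum t hT) hs (by simpa using hbig)
  obtain ⟨i, hi, -⟩ := huniq t₀ le_rfl
  have hgrow : ∀ t ∈ Set.Ici t₀, |a 1 * t + b 1| - D ≤ |x i t| := by
    refine isPreconnected_Ici.le_of_forall_le_or_le ((hcont i).abs.mono fun t ht => (ht₀ t ht).1)
      (by fun_prop) (fun t ht => ?_) (fun t ht => by linarith [(ht₀ t ht).2.2.2])
      Set.self_mem_Ici hi
    refine (ht₀ t ht).2.1 i |>.imp_right fun h => ?_
    have := abs_sub (x i t + (a 1 * t + b 1)) (x i t)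
    rw [add_sub_cancel_left] at this
    linarith
  refine ⟨i, tendsto_atTop_mono' _ (eventually_atTop.2 ⟨t₀, hgrow⟩)
    (tendsto_atTop_add_const_right _ _ hc), fun j hj => ⟨R, eventually_atTop.2 ⟨t₀, fun t ht => ?_⟩⟩⟩
  refine not_lt.1 fun hjt => hj ((huniq t ht).unique hjt ?_)
  linarith [hgrow t ht, (ht₀ t ht).2.2.2]
end

section
/- Let d ≥ 2, let μ₀,...,μ_{2d−2} ∈ ℝ with invertible Hankel matrix M (entries μ_{i+j−2}), and let X* = (x₁,...,x_{d−1}) ∈ ℝ^{d−1}. Define ϱ_k(X*) = (−1)^k e_k(x₁,...,x_{d−1}) (with ϱ₀ = 1). Suppose that P(X*) := Σ_{m=0}^{d−1} μ_m ϱ_{d−1−m}(X*) = 0 and moreover for each k = 0,...,d−2 the 'collided' Prony projection equations hold: Σ_{i=0}^{d} μ_{k+d−i} σ_i = 0, where σ_i are the coefficients of (z − x_{d−1})·Π_{j=1}^{d−1}(z − x_j) = z^d + σ₁z^{d−1} + ... + σ_d (node x_{d−1} doubled, σ₀ = 1). Then the vector (ϱ_{d−1}(X*), ϱ_{d−2}(X*),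 ..., ϱ₁(X*), 1) lies in the kernel of M, contradicting invertibility of M; hence no such X* exists. -/
open Polynomial

/-- Key step in the amplitude blow-up theorem: with `d = e + 2 ≥ 2` and an
invertible Hankel matrix `M` built from `μ`, there is no point
`X* = (x₁,…,x_{d-1})` such that the numerator polynomial
`P(X*) = ∑_m μ_m ϱ_{d-1-m}(X*)` vanishes while the `d - 1` "collided" Prony
projection equations (with the node `x_{d-1}` doubled) hold; here
`ϱ_{d-1-m}(X*)` is the coefficient of `z^m` in `R(z) = ∏_{j<d} (z - x_j)` and
the `σ_i` are the coefficients of `Q(z) = (z - x_{d-1}) R(z)`.  Otherwise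
`(ϱ_{d-1}, …, ϱ₁, 1)` would be a kernel vector of `M`. -/
theorem no_collided_zero_of_numerator (e : ℕ) (μ : ℕ → ℝ)
    (hM : (Matrix.of fun (i j : Fin (e + 2)) => μ (i.1 + j.1)).det ≠ 0)
    (x : Fin (e + 1) → ℝ)
    (hP : ∑ m ∈ Finset.range (e + 2),
        μ m * (∏ j, (X - C (x j))).coeff m = 0)
    (hcol : ∀ k ≤ e, ∑ i ∈ Finset.range (e + 3),
        μ (k + (e + 2) - i) *
          ((X - C (x (Fin.last e))) * ∏ j, (X - C (x j))).coeff
            ((e + 2) - i) = 0) :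
    False := by
  set R : ℝ[X] := ∏ j, (X - C (x j)) with hR
  set a : ℝ := x (Fin.last e) with ha
  have hRmonic : R.Monic := monic_prod_of_monic _ _ fun i _ => monic_X_sub_C _
  have hRdeg : R.natDegree = e + 1 := by
    rw [hR, natDegree_prod]
    · simp [natDegree_X_sub_C]
    · intro i _; exact X_sub_C_ne_zero _
  set S : ℕ → ℝ := fun k => ∑ j ∈ Finset.range (e + 2), μ (k + j) * R.coeff j with hS
  have hS0 : S 0 = 0 := by simp only [hS]; simpa using hP
  have hRtop : R.coeff (e + 2) = 0 :=
    coeff_eq_zero_of_natDegree_lt (by omega)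
  have hstep : ∀ k ≤ e, S (k + 1) = a * S k := by
    intro k hk
    have h := hcol k hk
    have hrefl : ∑ i ∈ Finset.range (e + 3), μ (k + (e + 2) - i) *
        ((X - C a) * R).coeff ((e + 2) - i)
        = ∑ j ∈ Finset.range (e + 3), μ (k + j) * ((X - C a) * R).coeff j := by
      conv_rhs => rw [← Finset.sum_range_reflect]
      refine Finset.sum_congr rfl fun i hi => ?_
      have hi' : i ≤ e + 2 := Nat.lt_succ_iff.mp (Finset.mem_range.mp hi)
      have h1 : k + (e + 2) - i = k + (e + 3 - 1 - i) := by omega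
      have h2 : (e + 2) - i = e + 3 - 1 - i := by omega
      rw [h1, h2]
    have hQ : ∀ j, ((X - C a) * R).coeff j = (X * R).coeff j - a * R.coeff j := by
      intro j; rw [sub_mul, coeff_sub, coeff_C_mul]
    have hT : ∑ j ∈ Finset.range (e + 3), μ (k + j) * ((X - C a) * R).coeff j
        = S (k + 1) - a * S k := by
      simp only [hQ, mul_sub]
      rw [Finset.sum_sub_distrib]
      congr 1
      · rw [Finset.sum_range_succ']
        have h0 : (X * R).coeff 0 = 0 := by
          simp [coeff_X_mul_zero]
        rw [h0, mul_zero, add_zero]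
        refine Finset.sum_congr rfl fun j hj => ?_
        rw [coeff_X_mul]
        ring_nf
      · rw [Finset.sum_range_succ, hRtop]
        simp only [mul_zero, add_zero]
        rw [Finset.mul_sum]
        refine Finset.sum_congr rfl fun j hj => ?_
        ring
    have := hrefl ▸ h
    have : S (k + 1) - a * S k = 0 := hT ▸ this
    linarith
  have hSall : ∀ k, k ≤ e + 1 → S k = 0 := by
    intro k
    induction k with
    | zero => intro _; exact hS0
    | succ n ih =>
      intro hn
      rw [hstep n (by omega), ih (by omega), mul_zero]
  set v : Fin (e + 2) → ℝ := fun j => R.coeff j.1 with hv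
  have hmv : (Matrix.of fun (i j : Fin (e + 2)) => μ (i.1 + j.1)).mulVec v = 0 := by
    funext i
    have hSi := hSall i.1 (by omega)
    simp only [Matrix.mulVec, dotProduct, Matrix.of_apply, Pi.zero_apply, hv]
    rw [Fin.sum_univ_eq_sum_range (fun j => μ (i.1 + j) * R.coeff j)]
    exact hSi
  have hv0 : v = 0 := Matrix.eq_zero_of_mulVec_eq_zero hM hmv
  have hlast : v (Fin.last (e + 1)) = 1 := by
    simp only [hv, Fin.val_last]
    have := hRmonic.coeff_natDegree
    rwa [hRdeg] at this
  rw [hv0] at hlast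
  simp at hlast
end

section
/- Let μ ∈ ℝ^{2d−1} with invertible d×d Hankel matrix M whose top-left (d−1)×(d−1) submatrix is also invertible. Let x₁(t) < ... < x_d(t) be continuous functions on an unbounded interval A' ⊂ ℝ such that (−1)^k e_k(x₁(t),...,x_d(t)) = σ_k(t), where σ_k(t) are the affine functions of t given by the Cramer's rule parametrization of the Prony curve (so σ₁(t) has slope ±M_{d,d}/det M ≠ 0). Then as t → ∞ in A', at most one node x_i(t) tends to infinity in absolute value. -/
open Polynomial Filter Matrix

/-!
By Cramer's rule the coefficient vector of `∏ (X - x_i(t))` is affine in `t`, so the nodes are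
roots of a pencil `A + t B` with `deg A = deg B + 1`, where the leading coefficient of `B` is
`(M⁻¹)_{d,d} = det M' / det M ≠ 0`. A root `z` of `A + t B` satisfies
`z A(z) B(z) = -t z B(z)²`, and `X A B` has even degree and leading coefficient `lc A · lc B`,
so every node escaping to infinity does so on the side where `lc A · lc B · z < 0`. Far out on
that side neither `B` nor the Wronskian `B A' - B' A` (of degree `2 deg B`, leading coefficient
`lc A · lc B`) vanishes, so `A / B` is injective there by Rolle's theorem; two escaping nodes both
satisfy `A / B = -t`, hence coincide.
-/

theorem Matrix.inv_apply_last_last {K : Type*} [Field K] {n : ℕ}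
    (M : Matrix (Fin (n + 1)) (Fin (n + 1)) K) :
    M⁻¹ (Fin.last n) (Fin.last n) = (M.submatrix Fin.castSucc Fin.castSucc).det / M.det := by
  rw [inv_def, smul_apply, adjugate_fin_succ_eq_det_submatrix, Fin.succAbove_last,
    Ring.inverse_eq_inv', smul_eq_mul, Fin.val_last, ← two_mul, pow_mul]
  simp [div_eq_inv_mul]

theorem Matrix.hankel_mulVec_eq {R : Type*} [Ring R] {n : ℕ} {μ : ℕ → R}
    {w : Fin (n + 1) → R} {t : R} (hlow : ∀ k < n, ∑ j : Fin (n + 1), μ (k + j) * w j = -μ (n + 1 + k))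
    (hlast : ∑ j : Fin (n + 1), μ (n + j) * w j = t) :
    (of fun i j : Fin (n + 1) => μ (i + j)) *ᵥ w =
      Fin.snoc (fun k : Fin n => -μ (n + 1 + k)) 0 + t • Pi.single (Fin.last n) 1 := by
  ext k
  induction k using Fin.lastCases with
  | last => simpa [mulVec, dotProduct] using hlast
  | cast k => simpa [mulVec, dotProduct] using hlow k k.isLt

theorem Polynomial.Monic.eq_X_pow_add_ofFn {R : Type*} [Semiring R] [DecidableEq R] {p : R[X]}
    {d : ℕ} (hp : p.Monic) (hdeg : p.natDegree = d) :
    p = X ^ d + ofFn d (fun k => p.coeff k) := by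
  ext m
  rcases lt_trichotomy m d with hm | rfl | hm
  · simp [coeff_X_pow, hm.ne, ofFn_coeff_eq_val_of_lt _ hm]
  · simp [ofFn_coeff_eq_zero_of_ge, ← hdeg, hp.coeff_natDegree]
  · simp [coeff_X_pow, hm.ne', ofFn_coeff_eq_zero_of_ge _ hm.le,
      coeff_eq_zero_of_natDegree_lt (hdeg ▸ hm)]

theorem Polynomial.Monic.eq_add_C_mul_of_mulVec_eq {R : Type*} [CommRing R] [DecidableEq R]
    {d : ℕ} {M : Matrix (Fin d) (Fin d) R} (hM : IsUnit M.det) {p : R[X]} (hp : p.Monic)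
    (hdeg : p.natDegree = d) {c e : Fin d → R} {t : R}
    (hsys : M *ᵥ (fun k => p.coeff k) = c + t • e) :
    p = (X ^ d + ofFn d (M⁻¹ *ᵥ c)) + C t * ofFn d (M⁻¹ *ᵥ e) := by
  have hcoeff : (fun k : Fin d => p.coeff k) = M⁻¹ *ᵥ c + t • M⁻¹ *ᵥ e := by
    rw [← mulVec_smul, ← mulVec_add, ← hsys, mulVec_mulVec, nonsing_inv_mul _ hM, one_mulVec]
  conv_lhs => rw [hp.eq_X_pow_add_ofFn hdeg, hcoeff]
  rw [map_add, map_smul, smul_eq_C_mul, add_assoc]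

theorem Polynomial.natDegree_X_pow_add_ofFn {R : Type*} [Semiring R] [DecidableEq R]
    [Nontrivial R] (d : ℕ) (a : Fin d → R) : (X ^ d + ofFn d a).natDegree = d := by
  rw [natDegree_add_eq_left_of_degree_lt (by simpa using ofFn_degree_lt a), natDegree_X_pow]

theorem Polynomial.natDegree_ofFn_of_last_ne_zero {R : Type*} [Semiring R] [DecidableEq R]
    {n : ℕ} {b : Fin (n + 1) → R} (hb : b (Fin.last n) ≠ 0) : (ofFn (n + 1) b).natDegree = n :=
  natDegree_eq_of_le_of_coeff_ne_zero (Nat.lt_succ_iff.1 (ofFn_natDegree_lt le_add_self b))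
    (by rwa [ofFn_coeff_eq_val_of_lt _ n.lt_succ_self])

theorem Polynomial.wronskian_ne_zero_of_natDegree_eq_succ {R : Type*} [CommRing R] [IsDomain R]
    {A B : R[X]} (hB : B ≠ 0) (hdeg : A.natDegree = B.natDegree + 1) : wronskian B A ≠ 0 := by
  set m := B.natDegree
  have hA : A ≠ 0 := by rintro rfl; simp at hdeg
  have hBA' : (B * derivative A).coeff (m + m) = B.leadingCoeff * ((m + 1) * A.leadingCoeff) := by
    rw [coeff_mul_add_eq_of_natDegree_le le_rfl (natDegree_derivative_le A |>.trans (by omega)),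
      coeff_derivative, ← hdeg]
    simp only [leadingCoeff, m]
    ring
  have hB'A : (derivative B * A).coeff (m + m) = m * B.leadingCoeff * A.leadingCoeff := by
    rcases Nat.eq_zero_or_pos m with hm | hm
    · simp [derivative_of_natDegree_zero hm, hm]
    · obtain ⟨k, hk⟩ : ∃ k, m = k + 1 := ⟨m - 1, by omega⟩
      rw [show m + m = k + A.natDegree by omega,
        coeff_mul_add_eq_of_natDegree_le (natDegree_derivative_le B |>.trans (by omega)) le_rfl,
        coeff_derivative, ← hk]
      simp only [leadingCoeff, m, hk]
      push_cast
      ring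
  intro h
  have hcoeff := congrArg (coeff · (m + m)) h
  simp only [wronskian, coeff_sub, hBA', hB'A, coeff_zero] at hcoeff
  exact mul_ne_zero (leadingCoeff_ne_zero.2 hB) (leadingCoeff_ne_zero.2 hA)
    (by linear_combination hcoeff)

theorem Polynomial.injOn_eval_div_eval {A B : ℝ[X]} {s : Set ℝ} (hs : s.OrdConnected)
    (hB : ∀ z ∈ s, B.eval z ≠ 0) (hW : ∀ z ∈ s, (wronskian B A).eval z ≠ 0) :
    s.InjOn fun z => A.eval z / B.eval z := by
  have hderiv : ∀ z ∈ s, HasDerivAt (fun z => A.eval z / B.eval z)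
      ((wronskian B A).eval z / B.eval z ^ 2) z := fun z hz => by
    refine ((A.hasDerivAt z).fun_div (B.hasDerivAt z) (hB z hz)).congr_deriv ?_
    simp only [wronskian, eval_sub, eval_mul]
    ring
  have rolle : ∀ u ∈ s, ∀ v ∈ s, u < v →
      A.eval u / B.eval u ≠ A.eval v / B.eval v := fun u hu v hv huv heq => by
    have hsub := hs.out hu hv
    obtain ⟨c, hc, hc0⟩ := exists_hasDerivAt_eq_zero huv
      (fun z hz => (hderiv z (hsub hz)).continuousAt.continuousWithinAt) heq
      (fun z hz => hderiv z (hsub (Set.Ioo_subset_Icc_self hz)))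
    have hcs := hsub (Set.Ioo_subset_Icc_self hc)
    exact div_ne_zero (hW c hcs) (pow_ne_zero 2 (hB c hcs)) hc0
  intro u hu v hv heq
  by_contra hne
  rcases lt_or_gt_of_ne hne with h | h
  · exact rolle u hu v hv h heq
  · exact rolle v hv u hu h heq.symm

theorem Polynomial.eventually_leadingCoeff_mul_eval_pos {p : ℝ[X]} (hp : 0 < p.natDegree)
    (heven : Even p.natDegree) : ∀ᶠ z in atBot ⊔ atTop, 0 < p.leadingCoeff * p.eval z := by
  have hc : p.leadingCoeff ≠ 0 := leadingCoeff_ne_zero.2 (ne_zero_of_natDegree_gt hp)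
  set q := C p.leadingCoeff * p
  have hqlc : 0 < q.leadingCoeff := by simp [q, mul_self_pos.2 hc]
  have hqdeg : 0 < q.degree := by
    rw [degree_C_mul hc]
    exact natDegree_pos_iff_degree_pos.1 hp
  have hcomplc : 0 < (q.comp (-X)).leadingCoeff := by
    rwa [comp_neg_X_leadingCoeff_eq, natDegree_C_mul hc, heven.neg_one_pow, one_mul]
  have hcompdeg : 0 < (q.comp (-X)).degree := by
    rw [← natDegree_pos_iff_degree_pos, natDegree_comp]
    simpa [q, natDegree_C_mul hc] using hp
  rw [eventually_sup]
  constructor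
  · have hbot := ((q.comp (-X)).tendsto_atTop_of_leadingCoeff_nonneg hcompdeg hcomplc.le).comp
      tendsto_neg_atBot_atTop
    filter_upwards [hbot.eventually_gt_atTop 0] with z hz
    simpa [q] using hz
  · filter_upwards [(q.tendsto_atTop_of_leadingCoeff_nonneg hqdeg hqlc.le).eventually_gt_atTop 0]
      with z hz
    simpa [q] using hz

theorem Polynomial.eventually_mul_neg_of_tendsto_abs_atTop {A B : ℝ[X]} (hB : B ≠ 0)
    (hdeg : A.natDegree = B.natDegree + 1) {z : ℝ → ℝ} (hz : Tendsto (|z ·|) atTop atTop)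
    (hroot : ∀ᶠ t in atTop, A.eval (z t) + t * B.eval (z t) = 0) :
    ∀ᶠ t in atTop, A.leadingCoeff * B.leadingCoeff * z t < 0 := by
  have hA : A ≠ 0 := by rintro rfl; simp at hdeg
  have hz' : Tendsto z atTop (atBot ⊔ atTop) := by
    rwa [← comap_abs_atTop, tendsto_comap_iff]
  have hBz : ∀ᶠ w in atBot ⊔ atTop, B.eval w ≠ 0 :=
    eventually_sup.2 ⟨eventually_atBot_not_isRoot B hB, eventually_atTop_not_isRoot B hB⟩
  have hsign := eventually_leadingCoeff_mul_eval_pos (p := X * A * B)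
    (by simp [natDegree_mul, hA, hB, X_ne_zero])
    (by simp [natDegree_mul, hA, hB, X_ne_zero, hdeg]; exact ⟨B.natDegree + 1, by ring⟩)
  filter_upwards [hz'.eventually hsign, hz'.eventually hBz, hroot, eventually_gt_atTop 0]
    with t hpos hBt hrt ht
  simp only [leadingCoeff_mul, leadingCoeff_X, one_mul, eval_mul, eval_X] at hpos
  rw [show A.eval (z t) = -t * B.eval (z t) by linarith] at hpos
  have : 0 < t * B.eval (z t) ^ 2 := by positivity
  nlinarith

theorem Polynomial.eventuallyEq_of_tendsto_abs_atTop {A B : ℝ[X]} (hB : B ≠ 0)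
    (hdeg : A.natDegree = B.natDegree + 1) {x y : ℝ → ℝ}
    (hx : Tendsto (|x ·|) atTop atTop) (hy : Tendsto (|y ·|) atTop atTop)
    (hxroot : ∀ᶠ t in atTop, A.eval (x t) + t * B.eval (x t) = 0)
    (hyroot : ∀ᶠ t in atTop, A.eval (y t) + t * B.eval (y t) = 0) : x =ᶠ[atTop] y := by
  have hq : B * wronskian B A ≠ 0 :=
    mul_ne_zero hB (wronskian_ne_zero_of_natDegree_eq_succ hB hdeg)
  have eventuallyEq_of_mem : ∀ s : Set ℝ, s.OrdConnected →
      (∀ w ∈ s, ¬(B * wronskian B A).IsRoot w) → (∀ z : ℝ → ℝ, Tendsto (|z ·|) atTop atTop →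
        (∀ᶠ t in atTop, A.eval (z t) + t * B.eval (z t) = 0) → ∀ᶠ t in atTop, z t ∈ s) →
      x =ᶠ[atTop] y := by
    intro s hs hsafe hmem
    have hBs : ∀ w ∈ s, B.eval w ≠ 0 := fun w hw h => hsafe w hw (by simp [h])
    have hinj := injOn_eval_div_eval (A := A) hs hBs fun w hw h => hsafe w hw (by simp [h])
    filter_upwards [hmem x hx hxroot, hmem y hy hyroot, hxroot, hyroot] with t hxs hys hrx hry
    refine hinj hxs hys ?_
    calc A.eval (x t) / B.eval (x t) = -t := by rw [div_eq_iff (hBs _ hxs)]; linarith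
      _ = A.eval (y t) / B.eval (y t) := by rw [eq_div_iff (hBs _ hys)]; linarith
  have hA : A ≠ 0 := by rintro rfl; simp at hdeg
  rcases (mul_ne_zero (leadingCoeff_ne_zero.2 hA) (leadingCoeff_ne_zero.2 hB)).lt_or_gt
    with hneg | hpos
  · obtain ⟨a, ha⟩ := eventually_atTop.1 (eventually_atTop_not_isRoot _ hq)
    refine eventuallyEq_of_mem (Set.Ici a) Set.ordConnected_Ici ha fun z hz hroot => ?_
    filter_upwards [hz.eventually_ge_atTop a,
      eventually_mul_neg_of_tendsto_abs_atTop hB hdeg hz hroot] with t hza hsign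
    rwa [abs_of_pos (pos_of_mul_neg_right hsign hneg.le)] at hza
  · obtain ⟨a, ha⟩ := eventually_atBot.1 (eventually_atBot_not_isRoot _ hq)
    refine eventuallyEq_of_mem (Set.Iic a) Set.ordConnected_Iic ha fun z hz hroot => ?_
    filter_upwards [hz.eventually_ge_atTop (-a),
      eventually_mul_neg_of_tendsto_abs_atTop hB hdeg hz hroot] with t hza hsign
    rw [abs_of_neg (neg_of_mul_neg_right hsign hpos.le)] at hza
    exact le_of_neg_le_neg hza

theorem at_most_one_node_to_infinity_general (n : ℕ) (μ : ℕ → ℝ)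
    (M : Matrix (Fin (n + 1)) (Fin (n + 1)) ℝ)
    (hMdef : M = Matrix.of fun (i j : Fin (n + 1)) => μ (i.1 + j.1))
    (hM : M.det ≠ 0)
    (hM' : (M.submatrix (Fin.castSucc : Fin n → Fin (n + 1))
        (Fin.castSucc : Fin n → Fin (n + 1))).det ≠ 0)
    (T : ℝ) (s : Fin (n + 1) → ℝ → ℝ) (x : Fin (n + 1) → ℝ → ℝ)
    (hmono : ∀ t ∈ Set.Ioi T, StrictMono (fun i => x i t))
    (hsys1 : ∀ t ∈ Set.Ioi T, ∀ k < n,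
      ∑ j : Fin (n + 1), μ (k + j.1) * s (Fin.rev j) t = -μ (n + 1 + k))
    (hsys2 : ∀ t ∈ Set.Ioi T,
      ∑ j : Fin (n + 1), μ (n + j.1) * s (Fin.rev j) t = t)
    (hcoeff : ∀ t ∈ Set.Ioi T, ∀ j : Fin (n + 1),
      (∏ i, (X - C (x i t))).coeff (n - j.1) = s j t) :
    ∀ i i' : Fin (n + 1),
      Tendsto (fun t => |x i t|) atTop atTop →
      Tendsto (fun t => |x i' t|) atTop atTop → i = i' := by
  intro i i' hi hi'
  set A : ℝ[X] :=
    X ^ (n + 1) + ofFn (n + 1) (M⁻¹ *ᵥ Fin.snoc (fun k : Fin n => -μ (n + 1 + k)) 0)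
  set B : ℝ[X] := ofFn (n + 1) (M⁻¹ *ᵥ Pi.single (Fin.last n) 1)
  have hpencil : ∀ t ∈ Set.Ioi T, ∏ j, (X - C (x j t)) = A + C t * B := by
    intro t ht
    refine (monic_prod_of_monic _ _ fun j _ => monic_X_sub_C (x j t)).eq_add_C_mul_of_mulVec_eq
      hM.isUnit (by simp [natDegree_prod_of_monic _ _ fun j _ => monic_X_sub_C (x j t)]) ?_
    have hv : (fun k : Fin (n + 1) => (∏ j, (X - C (x j t))).coeff k) = fun k => s k.rev t :=
      funext fun k => by
        simpa [Fin.val_rev, show n - (n - k) = k by omega] using hcoeff t ht k.rev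
    rw [hv, hMdef]
    exact hankel_mulVec_eq (hsys1 t ht) (hsys2 t ht)
  have hroot : ∀ j, ∀ᶠ t in atTop, A.eval (x j t) + t * B.eval (x j t) = 0 := fun j => by
    filter_upwards [eventually_gt_atTop T] with t ht
    have h : (A + C t * B).IsRoot (x j t) :=
      hpencil t ht ▸ (isRoot_prod _ _ _).2 ⟨j, Finset.mem_univ j, by simp⟩
    simpa using h
  have hb : (M⁻¹ *ᵥ Pi.single (Fin.last n) 1) (Fin.last n) ≠ 0 := by
    rw [mulVec_single_one, col_apply, inv_apply_last_last]
    exact div_ne_zero hM' hM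
  have hB : B ≠ 0 := ((injective_ofFn _).ne_iff' (ofFn_zero _)).2 fun h => hb (congrFun h _)
  have hdeg : A.natDegree = B.natDegree + 1 := by
    rw [natDegree_X_pow_add_ofFn, natDegree_ofFn_of_last_ne_zero hb]
  by_contra hne
  obtain ⟨t, hxt, ht⟩ := ((eventuallyEq_of_tendsto_abs_atTop hB hdeg hi hi' (hroot i)
    (hroot i')).and (eventually_gt_atTop T)).exists
  exact hne ((hmono t ht).injective hxt)

/-- If the Hankel matrix `M` of `μ` and its top-left `(d-1) × (d-1)` submatrix
are invertible (`d = n + 1 ≥ 2`), and `x₁(t) < ⋯ < x_d(t)` are continuous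
functions on an unbounded interval `(T, ∞)` whose signed elementary symmetric
functions `σ_k(t)` (the coefficients of `∏ (z - x_i(t))`) satisfy the
Cramer's-rule linear system parametrizing the Prony curve, then as `t → ∞` at
most one of the nodes `x_i(t)` tends to infinity in absolute value. -/
theorem at_most_one_node_to_infinity (n : ℕ) (hn : 1 ≤ n) (μ : ℕ → ℝ)
    (M : Matrix (Fin (n + 1)) (Fin (n + 1)) ℝ)
    (hMdef : M = Matrix.of fun (i j : Fin (n + 1)) => μ (i.1 + j.1))
    (hM : M.det ≠ 0)
    (hM' : (M.submatrix (Fin.castSucc : Fin n → Fin (n + 1))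
        (Fin.castSucc : Fin n → Fin (n + 1))).det ≠ 0)
    (T : ℝ) (s : Fin (n + 1) → ℝ → ℝ) (x : Fin (n + 1) → ℝ → ℝ)
    (hcont : ∀ i, ContinuousOn (x i) (Set.Ioi T))
    (hmono : ∀ t ∈ Set.Ioi T, StrictMono (fun i => x i t))
    (hsys1 : ∀ t ∈ Set.Ioi T, ∀ k < n,
      ∑ j : Fin (n + 1), μ (k + j.1) * s (Fin.rev j) t = -μ (n + 1 + k))
    (hsys2 : ∀ t ∈ Set.Ioi T,
      ∑ j : Fin (n + 1), μ (n + j.1) * s (Fin.rev j) t = t)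
    (hcoeff : ∀ t ∈ Set.Ioi T, ∀ j : Fin (n + 1),
      (∏ i, (X - C (x i t))).coeff (n - j.1) = s j t) :
    ∀ i i' : Fin (n + 1),
      Tendsto (fun t => |x i t|) atTop atTop →
      Tendsto (fun t => |x i' t|) atTop atTop → i = i' :=
  at_most_one_node_to_infinity_general n μ M hMdef hM hM' T s x hmono hsys1 hsys2 hcoeff
end
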